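/- arXiv:2509.23127 — 7 statements merged into one kernel-verified Lean document; each statement's English description precedes it below -/
import Mathlib

section
/- Let u, a, m be real numbers with 0 ≤ u ≤ 1/2, 0 ≤ a ≤ 1, m > 0, and m·u ≤ 1. Then ((1-a)/(1-u))^m ≤ e² · exp(-m·a). -/
open Real

/-- For `0 ≤ u ≤ 1/2`, `0 ≤ a ≤ 1`, `m > 0` and `m·u ≤ 1`, we have
`((1-a)/(1-u))^m ≤ e² · exp(-m·a)`. -/
theorem rpow_div_le_exp_sq_mul_exp_neg (u a m : ℝ) (hu0 : 0 ≤ u) (hu : u ≤ 1 / 2)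
    (ha0 : 0 ≤ a) (ha1 : a ≤ 1) (hm : 0 < m) (hmu : m * u ≤ 1) :
    ((1 - a) / (1 - u)) ^ m ≤ Real.exp 2 * Real.exp (-(m * a)) := by
  have h1u : (0:ℝ) < 1 - u := by linarith
  have ha' : 1 - a ≤ Real.exp (-a) := by nlinarith [Real.add_one_le_exp (-a)]
  have hu' : (1 - u)⁻¹ ≤ Real.exp (2*u) := by
    have h2 : (1-u)⁻¹ ≤ 1 + 2*u := by
      rw [inv_eq_one_div, div_le_iff₀ h1u]
      nlinarith
    have := Real.add_one_le_exp (2*u)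
    linarith
  have hbase : (1-a)/(1-u) ≤ Real.exp (-a) * Real.exp (2*u) := by
    rw [div_eq_mul_inv]
    exact mul_le_mul ha' hu' (inv_nonneg.2 h1u.le) (Real.exp_pos _).le
  have hb0 : 0 ≤ (1-a)/(1-u) := div_nonneg (by linarith) h1u.le
  calc ((1-a)/(1-u))^m ≤ (Real.exp (-a) * Real.exp (2*u))^m :=
        Real.rpow_le_rpow hb0 hbase hm.le
    _ = Real.exp ((-a + 2*u)*m) := by
        rw [← Real.exp_add, Real.rpow_def_of_pos (Real.exp_pos _), Real.log_exp]
    _ ≤ Real.exp 2 * Real.exp (-(m*a)) := by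
        rw [← Real.exp_add]
        apply Real.exp_le_exp.2
        nlinarith
end

section
/- Let A be an n×n real matrix with nonnegative entries, θ ∈ [0,1], every row sum and every column sum of A in [θ, 1], and let λ ∈ (0,1], q ∈ (0,1] with λq < 1. Then the matrix λ⁻¹I + qA is invertible, and for every column index j, the j-th column sum of (λ⁻¹I + qA)⁻¹ satisfies λ·(1/(1-(λqθ)²) - λq/(1-(λq)²)) ≤ ∑_i ((λ⁻¹I + qA)⁻¹)_{ij} ≤ λ·(1/(1-(λq)²) - λqθ/(1-(λqθ)²)). -/
open Finset Matrix

attribute [local instance] Matrix.linftyOpNormedAddCommGroup Matrix.linftyOpNormedRing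
  Matrix.linftyOpNormedSpace Matrix.linftyOpNormedAlgebra

/-- Entry evaluation as a continuous linear map. -/
noncomputable def entryCLM (n : ℕ) (i j : Fin n) :
    Matrix (Fin n) (Fin n) ℝ →L[ℝ] ℝ :=
  LinearMap.toContinuousLinearMap
    { toFun := fun M => M i j
      map_add' := fun M N => rfl
      map_smul' := fun c M => rfl }

/-- Let `A` be an `n × n` nonnegative matrix whose row and column sums all lie in `[θ, 1]`,
`θ ∈ [0,1]`, and let `l ∈ (0,1]`, `q ∈ (0,1]` with `l·q < 1`.  Then `l⁻¹ I + q A` is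
invertible and each column sum of its inverse lies between
`l (1/(1-(lqθ)²) - lq/(1-(lq)²))` and `l (1/(1-(lq)²) - lqθ/(1-(lqθ)²))`. -/
theorem colSum_inv_ridge_bounds (n : ℕ) (A : Matrix (Fin n) (Fin n) ℝ) (θ : ℝ)
    (hθ0 : 0 ≤ θ) (hθ1 : θ ≤ 1)
    (hA : ∀ i j, 0 ≤ A i j)
    (hrow : ∀ i, θ ≤ ∑ j, A i j ∧ ∑ j, A i j ≤ 1)
    (hcol : ∀ j, θ ≤ ∑ i, A i j ∧ ∑ i, A i j ≤ 1)
    (l q : ℝ) (hl0 : 0 < l) (hl1 : l ≤ 1) (hq0 : 0 < q) (hq1 : q ≤ 1) (hlq : l * q < 1) :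
    IsUnit (l⁻¹ • (1 : Matrix (Fin n) (Fin n) ℝ) + q • A) ∧
    ∀ j, l * (1 / (1 - (l * q * θ) ^ 2) - l * q / (1 - (l * q) ^ 2)) ≤
          ∑ i, (l⁻¹ • (1 : Matrix (Fin n) (Fin n) ℝ) + q • A)⁻¹ i j ∧
        ∑ i, (l⁻¹ • (1 : Matrix (Fin n) (Fin n) ℝ) + q • A)⁻¹ i j ≤
          l * (1 / (1 - (l * q) ^ 2) - l * q * θ / (1 - (l * q * θ) ^ 2)) := by
  have hlq0 : 0 < l * q := mul_pos hl0 hq0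
  set M : Matrix (Fin n) (Fin n) ℝ := l⁻¹ • (1 : Matrix (Fin n) (Fin n) ℝ) + q • A with hM
  set t : Matrix (Fin n) (Fin n) ℝ := (-(l * q)) • A with ht
  -- entries of A^k are nonnegative
  have hpow_pos : ∀ k i j, 0 ≤ (A ^ k) i j := by
    intro k
    induction k with
    | zero => intro i j; by_cases h : i = j <;> simp [Matrix.one_apply, h]
    | succ k ih =>
      intro i j
      rw [pow_succ, Matrix.mul_apply]
      exact Finset.sum_nonneg fun m _ => mul_nonneg (ih i m) (hA m j)
  -- column sums of A^k lie in [θ^k, 1]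
  have hS : ∀ k j, θ ^ k ≤ ∑ i, (A ^ k) i j ∧ ∑ i, (A ^ k) i j ≤ 1 := by
    intro k
    induction k with
    | zero => intro j; simp [Matrix.one_apply]
    | succ k ih =>
      intro j
      have h1 : ∑ i, (A ^ (k + 1)) i j = ∑ m, (∑ i, (A ^ k) i m) * A m j := by
        simp_rw [pow_succ, Matrix.mul_apply, Finset.sum_mul]
        exact Finset.sum_comm
      constructor
      · rw [h1, pow_succ]
        calc θ ^ k * θ ≤ θ ^ k * ∑ m, A m j := by
              have := (hcol j).1
              exact mul_le_mul_of_nonneg_left this (pow_nonneg hθ0 k)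
          _ = ∑ m, θ ^ k * A m j := Finset.mul_sum _ _ _
          _ ≤ ∑ m, (∑ i, (A ^ k) i m) * A m j :=
              Finset.sum_le_sum fun m _ =>
                mul_le_mul_of_nonneg_right (ih m).1 (hA m j)
      · rw [h1]
        calc ∑ m, (∑ i, (A ^ k) i m) * A m j ≤ ∑ m, 1 * A m j :=
              Finset.sum_le_sum fun m _ =>
                mul_le_mul_of_nonneg_right (ih m).2 (hA m j)
          _ = ∑ m, A m j := by simp
          _ ≤ 1 := (hcol j).2
  -- norm bound on t
  have hAnorm : ‖A‖ ≤ 1 := by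
    rw [Matrix.linfty_opNorm_def]
    have : ∀ i : Fin n, (∑ j, ‖A i j‖₊ : NNReal) ≤ 1 := by
      intro i
      rw [← NNReal.coe_le_coe]
      push_cast
      calc (∑ j, (‖A i j‖₊ : ℝ)) = ∑ j, A i j := by
            refine Finset.sum_congr rfl fun j _ => ?_
            simp [Real.nnnorm_of_nonneg (hA i j), hA i j]
        _ ≤ 1 := (hrow i).2
    have h2 : ((Finset.univ : Finset (Fin n)).sup fun i => ∑ j, ‖A i j‖₊) ≤ 1 :=
      Finset.sup_le fun i _ => this i
    exact_mod_cast h2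
  have htn : ‖t‖ < 1 := by
    rw [ht, norm_smul]
    calc ‖(-(l * q))‖ * ‖A‖ ≤ ‖(-(l * q))‖ * 1 :=
          mul_le_mul_of_nonneg_left hAnorm (norm_nonneg _)
      _ = l * q := by rw [mul_one, norm_neg, Real.norm_of_nonneg hlq0.le]
      _ < 1 := hlq
  -- summability of the Neumann series
  have hsum : Summable fun k : ℕ => t ^ k := summable_geometric_of_norm_lt_one htn
  set B : Matrix (Fin n) (Fin n) ℝ := l • ∑' k : ℕ, t ^ k with hB
  have hM' : M = l⁻¹ • (1 - t) := by
    rw [ht, hM, smul_sub, smul_smul]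
    have h : l⁻¹ * -(l * q) = -q := by field_simp
    rw [h, neg_smul, sub_neg_eq_add]
  have hMB : M * B = 1 := by
    rw [hM', hB, smul_mul_assoc, mul_smul_comm, smul_smul,
      inv_mul_cancel₀ hl0.ne', one_smul]
    exact mul_neg_geom_series t htn
  refine ⟨(Matrix.isUnit_iff_isUnit_det _).2 (Matrix.isUnit_det_of_right_inverse hMB), ?_⟩
  have hMinv : M⁻¹ = B := Matrix.inv_eq_right_inv hMB
  intro j
  -- entrywise expansion of B
  have hentry : ∀ i, B i j = l * ∑' k : ℕ, (-(l * q)) ^ k * (A ^ k) i j := by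
    intro i
    have h1 : (∑' k : ℕ, t ^ k) i j = ∑' k : ℕ, (t ^ k) i j := by
      have := (entryCLM n i j).map_tsum hsum
      exact this
    have h2 : ∀ k : ℕ, (t ^ k) i j = (-(l * q)) ^ k * (A ^ k) i j := by
      intro k
      rw [ht, smul_pow]
      rfl
    rw [hB]
    simp only [Matrix.smul_apply, smul_eq_mul, h1]
    rw [tsum_congr h2]
  have hsummand : ∀ i : Fin n, Summable fun k : ℕ => (-(l * q)) ^ k * (A ^ k) i j := by
    intro i
    refine Summable.of_norm_bounded (g := fun k => (l * q) ^ k)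
      (summable_geometric_of_lt_one hlq0.le hlq) fun k => ?_
    rw [norm_mul, norm_pow, norm_neg, Real.norm_of_nonneg hlq0.le]
    have h1 : (A ^ k) i j ≤ 1 := by
      calc (A ^ k) i j ≤ ∑ i', (A ^ k) i' j :=
            Finset.single_le_sum (fun i' _ => hpow_pos k i' j) (Finset.mem_univ i)
        _ ≤ 1 := (hS k j).2
    have h2 : ‖(A ^ k) i j‖ ≤ 1 := by
      rw [Real.norm_of_nonneg (hpow_pos k i j)]; exact h1
    calc (l * q) ^ k * ‖(A ^ k) i j‖ ≤ (l * q) ^ k * 1 :=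
          mul_le_mul_of_nonneg_left h2 (pow_nonneg hlq0.le k)
      _ = (l * q) ^ k := mul_one _
  -- column sum as a tsum
  set f : ℕ → ℝ := fun k => (-(l * q)) ^ k * ∑ i, (A ^ k) i j with hf
  have hfs : Summable f := by
    have := Summable.tsum_finsetSum (s := (Finset.univ : Finset (Fin n)))
      (f := fun i k => (-(l * q)) ^ k * (A ^ k) i j) (fun i _ => hsummand i)
    refine Summable.of_norm_bounded (g := fun k => (n : ℝ) * (l * q) ^ k)
      ((summable_geometric_of_lt_one hlq0.le hlq).mul_left _) fun k => ?_
    rw [hf]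
    calc ‖(-(l * q)) ^ k * ∑ i, (A ^ k) i j‖
        ≤ (l * q) ^ k * ‖∑ i, (A ^ k) i j‖ := by
          rw [norm_mul, norm_pow, norm_neg, Real.norm_of_nonneg hlq0.le]
      _ ≤ (l * q) ^ k * 1 := by
          refine mul_le_mul_of_nonneg_left ?_ (pow_nonneg hlq0.le k)
          rw [Real.norm_of_nonneg (Finset.sum_nonneg fun i _ => hpow_pos k i j)]
          exact (hS k j).2
      _ = (l * q) ^ k := mul_one _
      _ ≤ (n : ℝ) * (l * q) ^ k := by
          by_cases hn : n = 0
          · exact absurd j.2 (by simp [hn])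
          · have : (1 : ℝ) ≤ n := by exact_mod_cast Nat.one_le_iff_ne_zero.2 hn
            nlinarith [pow_nonneg hlq0.le k]
  have hcolsum : ∑ i, M⁻¹ i j = l * ∑' k : ℕ, f k := by
    rw [hMinv]
    calc ∑ i, B i j = ∑ i, l * ∑' k : ℕ, (-(l * q)) ^ k * (A ^ k) i j :=
          Finset.sum_congr rfl fun i _ => hentry i
      _ = l * ∑ i, ∑' k : ℕ, (-(l * q)) ^ k * (A ^ k) i j := (Finset.mul_sum _ _ _).symm
      _ = l * ∑' k : ℕ, ∑ i, (-(l * q)) ^ k * (A ^ k) i j := by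
          rw [← Summable.tsum_finsetSum (fun i _ => hsummand i)]
      _ = l * ∑' k : ℕ, f k := by
          congr 1
          refine tsum_congr fun k => ?_
          simp only [hf]
          rw [Finset.mul_sum]
  -- geometric quantities
  have hr1 : (l * q) ^ 2 < 1 := pow_lt_one₀ hlq0.le hlq (by norm_num)
  have hr1' : (0 : ℝ) ≤ (l * q) ^ 2 := sq_nonneg _
  have hr2 : (l * q * θ) ^ 2 < 1 := by
    refine pow_lt_one₀ (mul_nonneg hlq0.le hθ0) (lt_of_le_of_lt ?_ hlq) (by norm_num)
    nlinarith
  have hr2' : (0 : ℝ) ≤ (l * q * θ) ^ 2 := sq_nonneg _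
  have hg1 : Summable fun k : ℕ => ((l * q) ^ 2) ^ k :=
    summable_geometric_of_lt_one hr1' hr1
  have hg2 : Summable fun k : ℕ => ((l * q * θ) ^ 2) ^ k :=
    summable_geometric_of_lt_one hr2' hr2
  have htg1 : ∑' k : ℕ, ((l * q) ^ 2) ^ k = (1 - (l * q) ^ 2)⁻¹ :=
    tsum_geometric_of_lt_one hr1' hr1
  have htg2 : ∑' k : ℕ, ((l * q * θ) ^ 2) ^ k = (1 - (l * q * θ) ^ 2)⁻¹ :=
    tsum_geometric_of_lt_one hr2' hr2
  -- even and odd parts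
  have hfe : Summable fun k : ℕ => f (2 * k) :=
    hfs.comp_injective fun a b hab => by omega
  have hfo : Summable fun k : ℕ => f (2 * k + 1) :=
    hfs.comp_injective fun a b hab => by omega
  have hsplit : (∑' k : ℕ, f (2 * k)) + ∑' k : ℕ, f (2 * k + 1) = ∑' k : ℕ, f k :=
    tsum_even_add_odd hfe hfo
  -- pointwise bounds
  have heb : ∀ k : ℕ, ((l * q * θ) ^ 2) ^ k ≤ f (2 * k) ∧ f (2 * k) ≤ ((l * q) ^ 2) ^ k := by
    intro k
    have h0 : (-(l * q)) ^ (2 * k) = ((l * q) ^ 2) ^ k := by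
      rw [pow_mul, neg_sq]
    have hS' := hS (2 * k) j
    constructor
    · simp only [hf]
      rw [h0]
      calc ((l * q * θ) ^ 2) ^ k = ((l * q) ^ 2) ^ k * θ ^ (2 * k) := by
            rw [mul_pow (l * q) θ 2, mul_pow ((l * q) ^ 2) (θ ^ 2) k, pow_mul θ 2 k]
        _ ≤ ((l * q) ^ 2) ^ k * ∑ i, (A ^ (2 * k)) i j :=
            mul_le_mul_of_nonneg_left hS'.1 (pow_nonneg hr1' k)
    · simp only [hf]
      rw [h0]
      calc ((l * q) ^ 2) ^ k * ∑ i, (A ^ (2 * k)) i j ≤ ((l * q) ^ 2) ^ k * 1 :=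
            mul_le_mul_of_nonneg_left hS'.2 (pow_nonneg hr1' k)
        _ = ((l * q) ^ 2) ^ k := mul_one _
  have hob : ∀ k : ℕ, -(l * q * ((l * q) ^ 2) ^ k) ≤ f (2 * k + 1) ∧
      f (2 * k + 1) ≤ -(l * q * θ * ((l * q * θ) ^ 2) ^ k) := by
    intro k
    have h0 : (-(l * q)) ^ (2 * k + 1) = -((l * q) * ((l * q) ^ 2) ^ k) := by
      rw [pow_succ, pow_mul, neg_sq]; ring
    have hS' := hS (2 * k + 1) j
    have hc : 0 ≤ (l * q) * ((l * q) ^ 2) ^ k :=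
      mul_nonneg hlq0.le (pow_nonneg hr1' k)
    constructor
    · simp only [hf]
      rw [h0, neg_mul]
      refine neg_le_neg ?_
      calc (l * q) * ((l * q) ^ 2) ^ k * ∑ i, (A ^ (2 * k + 1)) i j
          ≤ (l * q) * ((l * q) ^ 2) ^ k * 1 := mul_le_mul_of_nonneg_left hS'.2 hc
        _ = l * q * ((l * q) ^ 2) ^ k := mul_one _
    · simp only [hf]
      rw [h0, neg_mul]
      refine neg_le_neg ?_
      calc l * q * θ * ((l * q * θ) ^ 2) ^ k
          = (l * q) * ((l * q) ^ 2) ^ k * θ ^ (2 * k + 1) := by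
            rw [mul_pow (l * q) θ 2, mul_pow ((l * q) ^ 2) (θ ^ 2) k,
              pow_succ θ (2 * k), pow_mul θ 2 k]
            ring
        _ ≤ (l * q) * ((l * q) ^ 2) ^ k * ∑ i, (A ^ (2 * k + 1)) i j :=
            mul_le_mul_of_nonneg_left hS'.1 hc
  -- assemble bounds on the tsum
  have hlow : 1 / (1 - (l * q * θ) ^ 2) - l * q / (1 - (l * q) ^ 2) ≤ ∑' k : ℕ, f k := by
    rw [← hsplit]
    have h1 : (1 : ℝ) / (1 - (l * q * θ) ^ 2) ≤ ∑' k : ℕ, f (2 * k) := by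
      rw [one_div, ← htg2]
      exact Summable.tsum_le_tsum (fun k => (heb k).1) hg2 hfe
    have h2 : -(l * q / (1 - (l * q) ^ 2)) ≤ ∑' k : ℕ, f (2 * k + 1) := by
      have : ∑' k : ℕ, -(l * q * ((l * q) ^ 2) ^ k) = -(l * q / (1 - (l * q) ^ 2)) := by
        rw [tsum_neg, tsum_mul_left, htg1, div_eq_mul_inv]
      rw [← this]
      exact Summable.tsum_le_tsum (fun k => (hob k).1) ((hg1.mul_left _).neg) hfo
    linarith
  have hhigh : ∑' k : ℕ, f k ≤ 1 / (1 - (l * q) ^ 2) - l * q * θ / (1 - (l * q * θ) ^ 2) := by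
    rw [← hsplit]
    have h1 : ∑' k : ℕ, f (2 * k) ≤ 1 / (1 - (l * q) ^ 2) := by
      rw [one_div, ← htg1]
      exact Summable.tsum_le_tsum (fun k => (heb k).2) hfe hg1
    have h2 : ∑' k : ℕ, f (2 * k + 1) ≤ -(l * q * θ / (1 - (l * q * θ) ^ 2)) := by
      have : ∑' k : ℕ, -(l * q * θ * ((l * q * θ) ^ 2) ^ k)
          = -(l * q * θ / (1 - (l * q * θ) ^ 2)) := by
        rw [tsum_neg, tsum_mul_left, htg2, div_eq_mul_inv]
      rw [← this]
      exact Summable.tsum_le_tsum (fun k => (hob k).2) hfo ((hg2.mul_left _).neg)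
    linarith
  rw [hcolsum]
  exact ⟨mul_le_mul_of_nonneg_left hlow hl0.le, mul_le_mul_of_nonneg_left hhigh hl0.le⟩
end

section
/- Let A be an n×n real matrix with nonnegative entries, θ ∈ [0,1], every row sum and every column sum of A in [θ, 1], and let λ ∈ (0,1], q ∈ (0,1] with λq < 1. Let k ∈ ℝⁿ be a vector with nonnegative entries whose entry sum lies in [θ, 1], and define r ∈ ℝⁿ by rᵢ = ∑_j k_j ((λ⁻¹I + qA)⁻¹)_{ji}. Set L := λ·(1/(1-(λqθ)²) - λq/(1-(λq)²)) and U := λ·(1/(1-(λq)²) - λqθ/(1-(λqθ)²)). If L ≥ 0, then θ·L ≤ ∑_i rᵢ ≤ U. -/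
open Finset Matrix

section AuxNorm

attribute [local instance] Matrix.linftyOpNormedRing Matrix.linftyOpNormedAlgebra
  Matrix.linftyOpNormedSpace

variable {n : ℕ}

lemma aux_norm_le_one (A : Matrix (Fin n) (Fin n) ℝ)
    (hA : ∀ i j, 0 ≤ A i j) (hrow : ∀ i, ∑ j, A i j ≤ 1) : ‖A‖ ≤ 1 := by
  have h1 : ‖A‖₊ ≤ 1 := by
    rw [Matrix.linfty_opNNNorm_def]
    refine Finset.sup_le fun i _ => ?_
    have : ((∑ j, ‖A i j‖₊ : NNReal) : ℝ) ≤ ((1 : NNReal) : ℝ) := by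
      push_cast
      calc ∑ j, ‖A i j‖ = ∑ j, A i j := by
            refine Finset.sum_congr rfl fun j _ => ?_
            rw [Real.norm_eq_abs, abs_of_nonneg (hA i j)]
        _ ≤ 1 := hrow i
    exact_mod_cast this
  calc ‖A‖ = ((‖A‖₊ : NNReal) : ℝ) := rfl
    _ ≤ 1 := by exact_mod_cast h1

lemma aux_isUnit (A : Matrix (Fin n) (Fin n) ℝ)
    (hA : ∀ i j, 0 ≤ A i j) (hrow : ∀ i, ∑ j, A i j ≤ 1)
    (t : ℝ) (ht0 : 0 ≤ t) (ht1 : t < 1) :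
    IsUnit ((1 : Matrix (Fin n) (Fin n) ℝ) + t • A) := by
  have hX : ‖-(t • A)‖ < 1 := by
    rw [norm_neg, norm_smul, Real.norm_eq_abs, abs_of_nonneg ht0]
    calc t * ‖A‖ ≤ t * 1 := by
          exact mul_le_mul_of_nonneg_left (aux_norm_le_one A hA hrow) ht0
      _ < 1 := by linarith
  have := isUnit_one_sub_of_norm_lt_one hX
  rwa [sub_neg_eq_add] at this

lemma aux_hasSum (A : Matrix (Fin n) (Fin n) ℝ)
    (hA : ∀ i j, 0 ≤ A i j) (hrow : ∀ i, ∑ j, A i j ≤ 1)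
    (t : ℝ) (ht0 : 0 ≤ t) (ht1 : t < 1) (k : Fin n → ℝ) :
    HasSum (fun m => (-t) ^ m * ∑ i, ∑ j, k j * (A ^ m) j i)
      (∑ i, ∑ j, k j * ((1 + t • A)⁻¹) j i) := by
  haveI : CompleteSpace (Matrix (Fin n) (Fin n) ℝ) := FiniteDimensional.complete ℝ _
  set X : Matrix (Fin n) (Fin n) ℝ := -(t • A) with hXdef
  have hX : ‖X‖ < 1 := by
    rw [hXdef, norm_neg, norm_smul, Real.norm_eq_abs, abs_of_nonneg ht0]
    calc t * ‖A‖ ≤ t * 1 := by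
          exact mul_le_mul_of_nonneg_left (aux_norm_le_one A hA hrow) ht0
      _ < 1 := by linarith
  have hsX : HasSum (fun m => X ^ m) (1 - X)⁻¹ := by
    have h1 : ((1 : Matrix (Fin n) (Fin n) ℝ) - X)⁻¹ = ∑' m, X ^ m :=
      Matrix.inv_eq_right_inv (mul_neg_geom_series X hX)
    rw [h1]
    exact (summable_geometric_of_norm_lt_one hX).hasSum
  let φ : Matrix (Fin n) (Fin n) ℝ →ₗ[ℝ] ℝ :=
    { toFun := fun Y => ∑ i, ∑ j, k j * Y j i
      map_add' := by
        intro Y Z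
        simp [Matrix.add_apply, mul_add, Finset.sum_add_distrib]
      map_smul' := by
        intro c Y
        simp [Matrix.smul_apply, smul_eq_mul, Finset.mul_sum]
        congr 1
        ext i
        congr 1
        ext j
        ring }
  have hφc : Continuous φ := φ.continuous_of_finiteDimensional
  have hmap := hsX.map φ.toAddMonoidHom hφc
  have hXm : ∀ m, X ^ m = (-t) ^ m • A ^ m := by
    intro m
    rw [hXdef, ← neg_smul, smul_pow]
  have h2 : ((1 : Matrix (Fin n) (Fin n) ℝ) - X) = 1 + t • A := by
    rw [hXdef, sub_neg_eq_add]
  have hterm : ∀ m, φ (X ^ m) = (-t) ^ m * ∑ i, ∑ j, k j * (A ^ m) j i := by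
    intro m
    rw [hXm m, _root_.map_smul]
    simp only [φ, LinearMap.coe_mk, AddHom.coe_mk, smul_eq_mul]
  rw [h2] at hmap
  have : (⇑φ.toAddMonoidHom ∘ fun m => X ^ m) = fun m => (-t) ^ m * ∑ i, ∑ j, k j * (A ^ m) j i := by
    funext m
    exact hterm m
  rw [this] at hmap
  exact hmap

end AuxNorm

lemma aux_pair_low (l t θ Q P a b : ℝ) (hl : 0 ≤ l) (hθ0 : 0 ≤ θ) (ht0 : 0 ≤ t) (ht1 : t ≤ 1)
    (hP : 0 ≤ P) (hQ0 : 0 ≤ Q) (hQ1 : Q ≤ 1) (hqa : θ * Q ≤ a) (hba : b ≤ a) :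
    l * θ * (P * Q) - l * θ * t * P ≤ l * P * a - l * t * P * b := by
  nlinarith [mul_nonneg (mul_nonneg hl hP) (mul_nonneg (sub_nonneg.mpr ht1) (sub_nonneg.mpr hqa)),
    mul_nonneg (mul_nonneg hl hP) (mul_nonneg ht0 (sub_nonneg.mpr hba)),
    mul_nonneg (mul_nonneg hl hP) (mul_nonneg ht0 (mul_nonneg hθ0 (sub_nonneg.mpr hQ1)))]

lemma aux_pair_high (l t θ Q P a b : ℝ) (hl : 0 ≤ l) (hθ0 : 0 ≤ θ) (hθ1 : θ ≤ 1)
    (ht0 : 0 ≤ t) (ht1 : t ≤ 1)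
    (hP : 0 ≤ P) (hQ0 : 0 ≤ Q) (hQ1 : Q ≤ 1) (ha1 : a ≤ 1) (hab : θ * a ≤ b) :
    l * P * a - l * t * P * b ≤ l * P - l * t * θ * (P * Q) := by
  have htθ : t * θ ≤ 1 := by nlinarith
  nlinarith [mul_nonneg (mul_nonneg hl hP) (mul_nonneg (sub_nonneg.mpr htθ) (sub_nonneg.mpr ha1)),
    mul_nonneg (mul_nonneg hl hP) (mul_nonneg ht0 (sub_nonneg.mpr hab)),
    mul_nonneg (mul_nonneg hl hP) (mul_nonneg ht0 (mul_nonneg hθ0 (sub_nonneg.mpr hQ1)))]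

/-- With `A`, `θ`, `l`, `q` as in the column-sum lemma, and `k` a nonnegative vector with entry
sum in `[θ, 1]`, the kernel-ridge-regression weight vector
`rᵢ = ∑ⱼ kⱼ ((l⁻¹ I + q A)⁻¹)ⱼᵢ` has total weight between `θ·L` and `U`, where
`L = l (1/(1-(lqθ)²) - lq/(1-(lq)²))` and `U = l (1/(1-(lq)²) - lqθ/(1-(lqθ)²))`,
provided `L ≥ 0`. -/
theorem sum_krr_weights_bounds (n : ℕ) (A : Matrix (Fin n) (Fin n) ℝ) (θ : ℝ)
    (hθ0 : 0 ≤ θ) (hθ1 : θ ≤ 1)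
    (hA : ∀ i j, 0 ≤ A i j)
    (hrow : ∀ i, θ ≤ ∑ j, A i j ∧ ∑ j, A i j ≤ 1)
    (hcol : ∀ j, θ ≤ ∑ i, A i j ∧ ∑ i, A i j ≤ 1)
    (l q : ℝ) (hl0 : 0 < l) (hl1 : l ≤ 1) (hq0 : 0 < q) (hq1 : q ≤ 1) (hlq : l * q < 1)
    (k : Fin n → ℝ) (hk : ∀ j, 0 ≤ k j) (hk1 : θ ≤ ∑ j, k j) (hk2 : ∑ j, k j ≤ 1)
    (r : Fin n → ℝ)
    (hr : ∀ i, r i = ∑ j, k j * (l⁻¹ • (1 : Matrix (Fin n) (Fin n) ℝ) + q • A)⁻¹ j i)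
    (L U : ℝ)
    (hL : L = l * (1 / (1 - (l * q * θ) ^ 2) - l * q / (1 - (l * q) ^ 2)))
    (hU : U = l * (1 / (1 - (l * q) ^ 2) - l * q * θ / (1 - (l * q * θ) ^ 2)))
    (hL0 : 0 ≤ L) :
    θ * L ≤ ∑ i, r i ∧ ∑ i, r i ≤ U := by
  set t := l * q with htdef
  have ht0 : 0 < t := mul_pos hl0 hq0
  have ht1 : t < 1 := hlq
  have hrow1 : ∀ i, ∑ j, A i j ≤ 1 := fun i => (hrow i).2
  -- the weight vectors and their sums
  set w : ℕ → Fin n → ℝ := fun m i => ∑ j, k j * (A ^ m) j i with hwdef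
  set s : ℕ → ℝ := fun m => ∑ i, w m i with hsdef
  have hw0 : ∀ i, w 0 i = k i := by
    intro i
    simp [hwdef, Matrix.one_apply]
  have hwrec : ∀ m i, w (m + 1) i = ∑ p, w m p * A p i := by
    intro m i
    simp only [hwdef]
    rw [pow_succ]
    simp_rw [Matrix.mul_apply, Finset.mul_sum, Finset.sum_mul]
    rw [Finset.sum_comm]
    refine Finset.sum_congr rfl fun p _ => Finset.sum_congr rfl fun j _ => by ring
  have hwnn : ∀ m i, 0 ≤ w m i := by
    intro m
    induction m with
    | zero => intro i; rw [hw0]; exact hk i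
    | succ m ih =>
      intro i
      rw [hwrec]
      exact Finset.sum_nonneg fun p _ => mul_nonneg (ih p) (hA p i)
  have hs0 : s 0 = ∑ j, k j := by
    simp only [hsdef]
    exact Finset.sum_congr rfl fun i _ => hw0 i
  have hsrec : ∀ m, s (m + 1) = ∑ p, w m p * (∑ i, A p i) := by
    intro m
    simp only [hsdef]
    simp_rw [hwrec, Finset.mul_sum]
    rw [Finset.sum_comm]
  have hsub : ∀ m, s (m + 1) ≤ s m := by
    intro m
    rw [hsrec]
    simp only [hsdef]
    refine Finset.sum_le_sum fun p _ => ?_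
    nth_rewrite 2 [← mul_one (w m p)]
    exact mul_le_mul_of_nonneg_left (hrow1 p) (hwnn m p)
  have hslb : ∀ m, θ * s m ≤ s (m + 1) := by
    intro m
    rw [hsrec]
    simp only [hsdef, Finset.mul_sum]
    refine Finset.sum_le_sum fun p _ => ?_
    rw [← Finset.mul_sum, mul_comm θ (w m p)]
    exact mul_le_mul_of_nonneg_left (hrow p).1 (hwnn m p)
  have hsnn : ∀ m, 0 ≤ s m := fun m => Finset.sum_nonneg fun i _ => hwnn m i
  have hsle1 : ∀ m, s m ≤ 1 := by
    intro m
    induction m with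
    | zero => rw [hs0]; exact hk2
    | succ m ih => exact (hsub m).trans ih
  have hsge : ∀ m, θ ^ (m + 1) ≤ s m := by
    intro m
    induction m with
    | zero => rw [pow_one, hs0]; exact hk1
    | succ m ih =>
      calc θ ^ (m + 2) = θ * θ ^ (m + 1) := by ring
        _ ≤ θ * s m := mul_le_mul_of_nonneg_left ih hθ0
        _ ≤ s (m + 1) := hslb m
  -- the series representation
  set Sphi : ℝ := ∑ i, ∑ j, k j * (((1 : Matrix (Fin n) (Fin n) ℝ) + t • A)⁻¹) j i with hSphidef
  have hHS : HasSum (fun m => (-t) ^ m * s m) Sphi :=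
    aux_hasSum A hA hrow1 t ht0.le ht1 k
  -- identify the sum of r with l * Sphi
  have hCu : IsUnit ((1 : Matrix (Fin n) (Fin n) ℝ) + t • A) :=
    aux_isUnit A hA hrow1 t ht0.le ht1
  have hCd : IsUnit ((1 : Matrix (Fin n) (Fin n) ℝ) + t • A).det :=
    (Matrix.isUnit_iff_isUnit_det _).mp hCu
  have hM : l⁻¹ • (1 : Matrix (Fin n) (Fin n) ℝ) + q • A
      = l⁻¹ • ((1 : Matrix (Fin n) (Fin n) ℝ) + t • A) := by
    rw [smul_add, smul_smul]
    congr 2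
    field_simp [htdef]
    rw [htdef]; ring
  have hMC : (l⁻¹ • (1 : Matrix (Fin n) (Fin n) ℝ) + q • A) *
      (l • ((1 : Matrix (Fin n) (Fin n) ℝ) + t • A)⁻¹) = 1 := by
    rw [hM, smul_mul_assoc, Matrix.mul_smul, smul_smul, inv_mul_cancel₀ hl0.ne', one_smul,
      Matrix.mul_nonsing_inv _ hCd]
  have hMinv : (l⁻¹ • (1 : Matrix (Fin n) (Fin n) ℝ) + q • A)⁻¹
      = l • ((1 : Matrix (Fin n) (Fin n) ℝ) + t • A)⁻¹ :=
    Matrix.inv_eq_right_inv hMC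
  have hSr : ∑ i, r i = l * Sphi := by
    rw [hSphidef, Finset.mul_sum]
    refine Finset.sum_congr rfl fun i _ => ?_
    rw [hr i, hMinv, Finset.mul_sum]
    refine Finset.sum_congr rfl fun j _ => ?_
    rw [Matrix.smul_apply, smul_eq_mul]
    ring
  -- the paired series
  set f : ℕ → ℝ := fun m => l * ((-t) ^ m * s m) with hfdef
  have hfS : HasSum f (l * Sphi) := hHS.mul_left l
  have habs : ∀ m, ‖f m‖ ≤ l * t ^ m := by
    intro m
    simp only [hfdef]
    simp only [Real.norm_eq_abs, abs_mul, abs_pow, abs_neg, abs_of_pos hl0, abs_of_pos ht0,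
      abs_of_nonneg (hsnn m)]
    have h1 : t ^ m * s m ≤ t ^ m * 1 := mul_le_mul_of_nonneg_left (hsle1 m) (pow_nonneg ht0.le m)
    have h2 := mul_le_mul_of_nonneg_left h1 hl0.le
    linarith
  have hgeo2 : (0:ℝ) ≤ t ^ 2 ∧ t ^ 2 < 1 := ⟨by positivity, by nlinarith⟩
  have he : Summable (fun j : ℕ => f (2 * j)) := by
    refine Summable.of_norm_bounded
      ((summable_geometric_of_lt_one hgeo2.1 hgeo2.2).mul_left l) fun j => ?_
    calc ‖f (2 * j)‖ ≤ l * t ^ (2 * j) := habs _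
      _ = l * (t ^ 2) ^ j := by rw [pow_mul]
  have ho : Summable (fun j : ℕ => f (2 * j + 1)) := by
    refine Summable.of_norm_bounded
      ((summable_geometric_of_lt_one hgeo2.1 hgeo2.2).mul_left (l * t)) fun j => ?_
    calc ‖f (2 * j + 1)‖ ≤ l * t ^ (2 * j + 1) := habs _
      _ = (l * t) * (t ^ 2) ^ j := by rw [pow_succ, pow_mul]; ring
  have hE := he.hasSum
  have hO := ho.hasSum
  have hEO : HasSum f ((∑' j : ℕ, f (2 * j)) + (∑' j : ℕ, f (2 * j + 1))) :=
    HasSum.even_add_odd hE hO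
  have hsum_eq : (∑' j : ℕ, f (2 * j)) + (∑' j : ℕ, f (2 * j + 1)) = l * Sphi :=
    hEO.unique hfS
  have hg : HasSum (fun j : ℕ => f (2 * j) + f (2 * j + 1)) (l * Sphi) := by
    rw [← hsum_eq]
    exact hE.add hO
  clear_value w s f Sphi t
  -- geometric sums for the bounds
  have htθ : (0:ℝ) ≤ (t * θ) ^ 2 ∧ (t * θ) ^ 2 < 1 := by
    constructor
    · positivity
    · have hx0 : 0 ≤ t * θ := mul_nonneg ht0.le hθ0
      have hx1 : t * θ < 1 := by nlinarith
      nlinarith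
  have hr1 : HasSum (fun j : ℕ => ((t * θ) ^ 2) ^ j) (1 - (t * θ) ^ 2)⁻¹ :=
    hasSum_geometric_of_lt_one htθ.1 htθ.2
  have hr2 : HasSum (fun j : ℕ => (t ^ 2) ^ j) (1 - t ^ 2)⁻¹ :=
    hasSum_geometric_of_lt_one hgeo2.1 hgeo2.2
  have hlb : HasSum (fun j : ℕ => l * θ * ((t * θ) ^ 2) ^ j - l * θ * t * (t ^ 2) ^ j) (θ * L) := by
    have h := (hr1.mul_left (l * θ)).sub (hr2.mul_left (l * θ * t))
    have heq : θ * L = l * θ * (1 - (t * θ) ^ 2)⁻¹ - l * θ * t * (1 - t ^ 2)⁻¹ := by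
      rw [hL, one_div, div_eq_mul_inv]
      ring
    rw [heq]
    exact h
  have hub : HasSum (fun j : ℕ => l * (t ^ 2) ^ j - l * t * θ * ((t * θ) ^ 2) ^ j) U := by
    have h := (hr2.mul_left l).sub (hr1.mul_left (l * t * θ))
    have heq : U = l * (1 - t ^ 2)⁻¹ - l * t * θ * (1 - (t * θ) ^ 2)⁻¹ := by
      rw [hU, one_div, div_eq_mul_inv]
      ring
    rw [heq]
    exact h
  -- pairwise inequalities
  have hpair : ∀ j : ℕ,
      f (2 * j) + f (2 * j + 1) = l * (t ^ 2) ^ j * s (2 * j) - l * t * (t ^ 2) ^ j * s (2 * j + 1) := by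
    intro j
    simp only [hfdef]
    have h1 : (-t) ^ (2 * j) = (t ^ 2) ^ j := by
      rw [pow_mul, neg_sq]
    have h2 : (-t) ^ (2 * j + 1) = -((t ^ 2) ^ j * t) := by
      rw [pow_succ, h1]
      ring
    rw [h1, h2]
    ring
  have hQfacts : ∀ j : ℕ, θ * (θ ^ 2) ^ j ≤ s (2 * j) ∧ (θ ^ 2) ^ j ≤ 1 ∧ (0:ℝ) ≤ (θ ^ 2) ^ j := by
    intro j
    refine ⟨?_, ?_, by positivity⟩
    · have := hsge (2 * j)
      calc θ * (θ ^ 2) ^ j = θ ^ (2 * j + 1) := by rw [← pow_mul]; ring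
        _ ≤ s (2 * j) := this
    · exact pow_le_one₀ (by positivity) (by nlinarith)
  have hlow : ∀ j : ℕ, l * θ * ((t * θ) ^ 2) ^ j - l * θ * t * (t ^ 2) ^ j
      ≤ f (2 * j) + f (2 * j + 1) := by
    intro j
    rw [hpair j]
    have hPQ : ((t * θ) ^ 2) ^ j = (t ^ 2) ^ j * (θ ^ 2) ^ j := by
      rw [← mul_pow, ← mul_pow]
    rw [hPQ]
    obtain ⟨hq1', hq2', hq3'⟩ := hQfacts j
    exact aux_pair_low l t θ _ _ _ _ hl0.le hθ0 ht0.le ht1.le (by positivity) hq3' hq2' hq1'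
      (hsub _)
  have hhigh : ∀ j : ℕ, f (2 * j) + f (2 * j + 1)
      ≤ l * (t ^ 2) ^ j - l * t * θ * ((t * θ) ^ 2) ^ j := by
    intro j
    rw [hpair j]
    have hPQ : ((t * θ) ^ 2) ^ j = (t ^ 2) ^ j * (θ ^ 2) ^ j := by
      rw [← mul_pow, ← mul_pow]
    rw [hPQ]
    obtain ⟨hq1', hq2', hq3'⟩ := hQfacts j
    exact aux_pair_high l t θ _ _ _ _ hl0.le hθ0 hθ1 ht0.le ht1.le (by positivity) hq3' hq2'
      (hsle1 _) (hslb _)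
  constructor
  · rw [hSr]
    exact hasSum_le hlow hlb hg
  · rw [hSr]
    exact hasSum_le hhigh hg hub
end

section
/- Let (X, dist) be a metric space, z, z₁, …, z_n ∈ X, δ > 0. Let A be an n×n real matrix with nonnegative entries such that A_{ij} = 0 whenever dist(z_i, z_j) > δ, with every row sum ≤ 1 and every column sum ≤ 1. Let k ∈ ℝⁿ be nonnegative with ∑_j k_j ≤ 1 and k_j = 0 whenever dist(z, z_j) > δ. Let λ ∈ (0,1], q ∈ (0,1] with λq < 1, and define r ∈ ℝⁿ by rᵢ = ∑_j k_j ((λ⁻¹I + qA)⁻¹)_{ji}. Then for every natural number L ≥ 1, ∑_{i : dist(z, z_i) > L·δ} |rᵢ| ≤ λ·(λq)^L/(1 - λq). -/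
open Finset Matrix

/-- Exponential decay of the BRAT-D kernel ridge regression weights: if the banded nonnegative
matrix `A` has row and column sums at most `1`, the nonnegative vector `k` has total mass at
most `1` and is supported within distance `δ` of the test point `z₀`, and
`rᵢ = ∑ⱼ kⱼ ((l⁻¹ I + q A)⁻¹)ⱼᵢ`, then the total absolute weight placed on points farther than
`L·δ` from `z₀` is at most `l (lq)^L / (1 - lq)`. -/
theorem sum_abs_krr_weights_far_le {X : Type*} [MetricSpace X] (n : ℕ)
    (z₀ : X) (z : Fin n → X) (δ : ℝ) (hδ : 0 < δ)
    (A : Matrix (Fin n) (Fin n) ℝ)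
    (hA0 : ∀ i j, 0 ≤ A i j)
    (hAband : ∀ i j, δ < dist (z i) (z j) → A i j = 0)
    (hrow : ∀ i, ∑ j, A i j ≤ 1) (hcol : ∀ j, ∑ i, A i j ≤ 1)
    (k : Fin n → ℝ) (hk0 : ∀ j, 0 ≤ k j) (hk1 : ∑ j, k j ≤ 1)
    (hkband : ∀ j, δ < dist z₀ (z j) → k j = 0)
    (l q : ℝ) (hl0 : 0 < l) (hl1 : l ≤ 1) (hq0 : 0 < q) (hq1 : q ≤ 1) (hlq : l * q < 1)
    (r : Fin n → ℝ)
    (hr : ∀ i, r i = ∑ j, k j * (l⁻¹ • (1 : Matrix (Fin n) (Fin n) ℝ) + q • A)⁻¹ j i)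
    (L : ℕ) (hL : 1 ≤ L) :
    ∑ i ∈ Finset.univ.filter (fun i => (L : ℝ) * δ < dist z₀ (z i)), |r i| ≤
      l * (l * q) ^ L / (1 - l * q) := by
  have hlq0 : 0 < l * q := mul_pos hl0 hq0
  have h1lq : 0 < 1 - l * q := by linarith
  rcases isEmpty_or_nonempty (Fin n) with hE | hNE
  · rw [Finset.univ_eq_empty, Finset.filter_empty, Finset.sum_empty]
    positivity
  set B : Matrix (Fin n) (Fin n) ℝ := (l * q) • A with hB
  have hB0 : ∀ a b, 0 ≤ B a b := fun a b => by
    simp only [hB, Matrix.smul_apply, smul_eq_mul]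
    exact mul_nonneg hlq0.le (hA0 a b)
  have hBrow : ∀ a, ∑ b, B a b ≤ l * q := fun a => by
    simp only [hB, Matrix.smul_apply, smul_eq_mul]
    rw [← Finset.mul_sum]
    nlinarith [hrow a, Finset.sum_nonneg fun j (_ : j ∈ Finset.univ) => hA0 a j]
  -- invertibility of 1 + B via strict diagonal dominance
  have hdet : IsUnit (1 + B).det := by
    refine isUnit_iff_ne_zero.mpr (det_ne_zero_of_sum_row_lt_diag ?_)
    intro i
    have h1 : ∑ j ∈ Finset.univ.erase i, ‖(1 + B) i j‖ ≤ l * q := by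
      calc ∑ j ∈ Finset.univ.erase i, ‖(1 + B) i j‖
          = ∑ j ∈ Finset.univ.erase i, B i j := by
            refine Finset.sum_congr rfl fun j hj => ?_
            have hji : i ≠ j := (Finset.ne_of_mem_erase hj).symm
            rw [Matrix.add_apply, Matrix.one_apply_ne hji, zero_add, Real.norm_eq_abs,
              abs_of_nonneg (hB0 i j)]
        _ ≤ ∑ j, B i j := Finset.sum_le_sum_of_subset_of_nonneg
            (Finset.erase_subset _ _) (fun j _ _ => hB0 i j)
        _ ≤ l * q := hBrow i
    have h2 : (1 : ℝ) ≤ ‖(1 + B) i i‖ := by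
      rw [Matrix.add_apply, Matrix.one_apply_eq, Real.norm_eq_abs,
        abs_of_nonneg (by linarith [hB0 i i])]
      linarith [hB0 i i]
    linarith
  set C : Matrix (Fin n) (Fin n) ℝ := (1 + B)⁻¹ with hC
  have hBC : (1 + B) * C = 1 := Matrix.mul_nonsing_inv _ hdet
  -- rewrite r in terms of C
  have hsc : q = l⁻¹ * (l * q) := by field_simp
  have hMeq : l⁻¹ • (1 : Matrix (Fin n) (Fin n) ℝ) + q • A = l⁻¹ • (1 + B) := by
    rw [smul_add, smul_smul, ← hsc]
  have hinv : (l⁻¹ • (1 : Matrix (Fin n) (Fin n) ℝ) + q • A)⁻¹ = l • C := by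
    rw [hMeq]
    have : Invertible (l⁻¹) := invertibleOfNonzero (inv_ne_zero hl0.ne')
    rw [Matrix.inv_smul _ _ hdet, invOf_eq_inv, inv_inv, hC]
  have hrg : ∀ i, r i = l * ∑ j, k j * C j i := by
    intro i
    rw [hr i, hinv, Finset.mul_sum]
    refine Finset.sum_congr rfl fun j _ => ?_
    simp only [Matrix.smul_apply, smul_eq_mul]
    ring
  -- banded structure of powers of A
  have hApow : ∀ m : ℕ, ∀ i j, (m : ℝ) * δ < dist (z i) (z j) → (A ^ m) i j = 0 := by
    intro m
    induction m with
    | zero =>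
      intro i j h
      rw [pow_zero, Matrix.one_apply_ne]
      rintro rfl
      simp at h
    | succ m ih =>
      intro i j h
      rw [pow_succ, Matrix.mul_apply]
      refine Finset.sum_eq_zero fun t _ => ?_
      by_cases ht : δ < dist (z t) (z j)
      · rw [hAband t j ht, mul_zero]
      · push_neg at ht
        have htr := dist_triangle (z i) (z t) (z j)
        push_cast at h
        have hd : (m : ℝ) * δ < dist (z i) (z t) := by nlinarith
        rw [ih i t hd, zero_mul]
  have hApow0 : ∀ m : ℕ, ∀ i j, 0 ≤ (A ^ m) i j := by
    intro m
    induction m with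
    | zero =>
      intro i j
      rw [pow_zero, Matrix.one_apply]
      split <;> norm_num
    | succ m ih =>
      intro i j
      rw [pow_succ, Matrix.mul_apply]
      exact Finset.sum_nonneg fun t _ => mul_nonneg (ih i t) (hA0 t j)
  have hArow : ∀ m : ℕ, ∀ i, ∑ j, (A ^ m) i j ≤ 1 := by
    intro m
    induction m with
    | zero => intro i; simp [Matrix.one_apply]
    | succ m ih =>
      intro i
      rw [pow_succ]
      calc ∑ j, (A ^ m * A) i j = ∑ t, (A ^ m) i t * ∑ j, A t j := by
            simp_rw [Matrix.mul_apply, Finset.mul_sum]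
            exact Finset.sum_comm
        _ ≤ ∑ t, (A ^ m) i t * 1 := Finset.sum_le_sum fun t _ =>
            mul_le_mul_of_nonneg_left (hrow t) (hApow0 m i t)
        _ = ∑ t, (A ^ m) i t := by simp
        _ ≤ 1 := ih i
  -- bound on absolute row sums of C
  have hne : (Finset.univ : Finset (Fin n)).Nonempty := Finset.univ_nonempty
  set F : ℝ := Finset.univ.sup' hne (fun j => ∑ i, |C j i|) with hFdef
  have hfF : ∀ t, ∑ i, |C t i| ≤ F := fun t =>
    Finset.le_sup' (fun j => ∑ i, |C j i|) (Finset.mem_univ t)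
  have hF0 : 0 ≤ F := by
    obtain ⟨t⟩ := hNE
    exact le_trans (Finset.sum_nonneg fun i _ => abs_nonneg _) (hfF t)
  have hCeq : C = 1 - B * C := by
    have h := hBC
    rw [add_mul, one_mul] at h
    exact eq_sub_of_add_eq h
  have hfle : ∀ j, ∑ i, |C j i| ≤ 1 + (l * q) * F := by
    intro j
    calc ∑ i, |C j i|
        ≤ ∑ i, (|(1 : Matrix (Fin n) (Fin n) ℝ) j i| + ∑ t, B j t * |C t i|) := by
          refine Finset.sum_le_sum fun i _ => ?_
          conv_lhs => rw [hCeq]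
          rw [Matrix.sub_apply, Matrix.mul_apply]
          refine (abs_sub _ _).trans (add_le_add_right ?_ _)
          refine (Finset.abs_sum_le_sum_abs _ _).trans (Finset.sum_le_sum fun t _ => ?_)
          rw [abs_mul, abs_of_nonneg (hB0 j t)]
      _ = (∑ i, |(1 : Matrix (Fin n) (Fin n) ℝ) j i|) + ∑ i, ∑ t, B j t * |C t i| :=
          Finset.sum_add_distrib
      _ = 1 + ∑ t, B j t * ∑ i, |C t i| := by
          congr 1
          · simp [Matrix.one_apply, apply_ite abs]
          · rw [Finset.sum_comm]
            exact Finset.sum_congr rfl fun t _ => (Finset.mul_sum _ _ _).symm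
      _ ≤ 1 + ∑ t, B j t * F := by
          refine add_le_add_right (Finset.sum_le_sum fun t _ => ?_) 1
          exact mul_le_mul_of_nonneg_left (hfF t) (hB0 j t)
      _ ≤ 1 + (l * q) * F := by
          rw [← Finset.sum_mul]
          nlinarith [hBrow j]
  have hFle : F ≤ 1 + (l * q) * F := Finset.sup'_le hne _ fun j _ => hfle j
  have hFbound : F ≤ 1 / (1 - l * q) := by
    rw [le_div_iff₀ h1lq]
    nlinarith
  -- geometric decomposition of C
  set S : Matrix (Fin n) (Fin n) ℝ := ∑ m ∈ Finset.range L, (-B) ^ m with hS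
  have hgeom1 : S * (1 + B) = 1 - (-B) ^ L := by
    have h := geom_sum_mul (-B) L
    rw [← hS, show (-B - 1 : Matrix (Fin n) (Fin n) ℝ) = -(1 + B) by abel, mul_neg] at h
    rw [neg_eq_iff_eq_neg.mp h, neg_sub]
  have hgeom : C = S + (-B) ^ L * C := by
    have h2 : S = S * ((1 + B) * C) := by rw [hBC, mul_one]
    rw [← mul_assoc, hgeom1, sub_mul, one_mul] at h2
    rw [h2]
    abel
  have hentry : ∀ j i, C j i = S j i + ((-B) ^ L * C) j i := by
    intro j i
    conv_lhs => rw [hgeom]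
    rw [Matrix.add_apply]
  have hnegB : ∀ m : ℕ, ∀ a b, ((-B) ^ m) a b = (-(l * q)) ^ m * (A ^ m) a b := by
    intro m a b
    rw [show (-B : Matrix (Fin n) (Fin n) ℝ) = (-(l * q)) • A by rw [hB, neg_smul],
      smul_pow, Matrix.smul_apply, smul_eq_mul]
  -- the S part vanishes on far points weighted by k
  have hSzero : ∀ i, (L : ℝ) * δ < dist z₀ (z i) → ∀ j, k j * S j i = 0 := by
    intro i hi j
    rcases eq_or_ne (k j) 0 with h | h
    · rw [h, zero_mul]
    · have hj : dist z₀ (z j) ≤ δ := by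
        by_contra hc
        exact h (hkband j (lt_of_not_ge hc))
      have hji : ∀ m ∈ Finset.range L, ((-B) ^ m) j i = 0 := by
        intro m hm
        rw [hnegB]
        have hmL : (m : ℝ) ≤ (L : ℝ) - 1 := by
          have h' : (m : ℝ) + 1 ≤ (L : ℝ) := by exact_mod_cast Finset.mem_range.mp hm
          linarith
        have htr := dist_triangle z₀ (z j) (z i)
        have hd : (m : ℝ) * δ < dist (z j) (z i) := by nlinarith
        rw [hApow m j i hd, mul_zero]
      rw [hS, Matrix.sum_apply, Finset.sum_eq_zero hji, mul_zero]
  -- bound on the remainder row sums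
  have hRbound : ∀ j, ∑ i, |((-B) ^ L * C) j i| ≤ (l * q) ^ L * F := by
    intro j
    calc ∑ i, |((-B) ^ L * C) j i|
        ≤ ∑ i, ∑ t, (l * q) ^ L * ((A ^ L) j t * |C t i|) := by
          refine Finset.sum_le_sum fun i _ => ?_
          rw [Matrix.mul_apply]
          refine (Finset.abs_sum_le_sum_abs _ _).trans (Finset.sum_le_sum fun t _ => ?_)
          rw [hnegB L j t, abs_mul, abs_mul, abs_pow, abs_neg, abs_of_nonneg hlq0.le,
            abs_of_nonneg (hApow0 L j t), mul_assoc]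
      _ = (l * q) ^ L * ∑ t, (A ^ L) j t * ∑ i, |C t i| := by
          rw [Finset.sum_comm, Finset.mul_sum]
          refine Finset.sum_congr rfl fun t _ => ?_
          rw [Finset.mul_sum, Finset.mul_sum]
      _ ≤ (l * q) ^ L * ∑ t, (A ^ L) j t * F := by
          refine mul_le_mul_of_nonneg_left (Finset.sum_le_sum fun t _ => ?_) (by positivity)
          exact mul_le_mul_of_nonneg_left (hfF t) (hApow0 L j t)
      _ ≤ (l * q) ^ L * (1 * F) := by
          refine mul_le_mul_of_nonneg_left ?_ (by positivity)
          rw [← Finset.sum_mul]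
          exact mul_le_mul_of_nonneg_right (hArow L j) hF0
      _ = (l * q) ^ L * F := by ring
  -- main estimate
  calc ∑ i ∈ Finset.univ.filter (fun i => (L : ℝ) * δ < dist z₀ (z i)), |r i|
      = ∑ i ∈ Finset.univ.filter (fun i => (L : ℝ) * δ < dist z₀ (z i)),
          l * |∑ j, k j * ((-B) ^ L * C) j i| := by
        refine Finset.sum_congr rfl fun i hi => ?_
        have hi' := (Finset.mem_filter.mp hi).2
        rw [hrg i, abs_mul, abs_of_pos hl0]
        congr 2
        refine Finset.sum_congr rfl fun j _ => ?_
        rw [hentry j i, mul_add, hSzero i hi' j, zero_add]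
    _ ≤ ∑ i ∈ Finset.univ.filter (fun i => (L : ℝ) * δ < dist z₀ (z i)),
          l * ∑ j, k j * |((-B) ^ L * C) j i| := by
        refine Finset.sum_le_sum fun i _ => mul_le_mul_of_nonneg_left ?_ hl0.le
        refine (Finset.abs_sum_le_sum_abs _ _).trans (Finset.sum_le_sum fun j _ => ?_)
        rw [abs_mul, abs_of_nonneg (hk0 j)]
    _ ≤ ∑ i, l * ∑ j, k j * |((-B) ^ L * C) j i| :=
        Finset.sum_le_sum_of_subset_of_nonneg (Finset.filter_subset _ _)
          (fun i _ _ => mul_nonneg hl0.le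
            (Finset.sum_nonneg fun j _ => mul_nonneg (hk0 j) (abs_nonneg _)))
    _ = l * ∑ j, k j * ∑ i, |((-B) ^ L * C) j i| := by
        rw [← Finset.mul_sum]
        congr 1
        rw [Finset.sum_comm]
        exact Finset.sum_congr rfl fun j _ => (Finset.mul_sum _ _ _).symm
    _ ≤ l * ∑ j, k j * ((l * q) ^ L * F) := by
        refine mul_le_mul_of_nonneg_left (Finset.sum_le_sum fun j _ => ?_) hl0.le
        exact mul_le_mul_of_nonneg_left (hRbound j) (hk0 j)
    _ = l * (∑ j, k j) * ((l * q) ^ L * F) := by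
        rw [← Finset.sum_mul]
        ring
    _ ≤ l * 1 * ((l * q) ^ L * (1 / (1 - l * q))) := by
        have hks : 0 ≤ ∑ j, k j := Finset.sum_nonneg fun j _ => hk0 j
        have h1 : l * (∑ j, k j) ≤ l * 1 := mul_le_mul_of_nonneg_left hk1 hl0.le
        have h2 : (l * q) ^ L * F ≤ (l * q) ^ L * (1 / (1 - l * q)) :=
          mul_le_mul_of_nonneg_left hFbound (by positivity)
        have h3 : 0 ≤ (l * q) ^ L * F := by positivity
        nlinarith [mul_pos hl0 (by norm_num : (0:ℝ) < 1)]
    _ = l * (l * q) ^ L / (1 - l * q) := by ring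
end

section
/- Let (Ω, ℱ, P) be a probability space, d ≥ 1, and let (Z_t)_{t∈ℕ} be a sequence of integrable random vectors in ℝ^d with ℱ_0 trivial and ℱ_t = σ(Z_1, …, Z_t). Let (λ_t)_{t≥1} be real numbers with 0 < λ_t ≤ 1 and ∑_{t=1}^∞ (1 - λ_t) = ∞. Define ε_t = Z_t - E[Z_t | ℱ_{t-1}]. Assume: (i) ‖E[Z_t | ℱ_{t-1}]‖ ≤ λ_t ‖Z_{t-1}‖ almost surely for every t ≥ 1; (ii) there are constants c_t → 0 with ‖ε_t‖ ≤ c_t almost surely; (iii) ∑_{t=1}^∞ E[‖ε_t‖²] < ∞. Then Z_t → 0 almost surely. -/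
open MeasureTheory Filter
open Topology

/-- Conditional expectation commutes with continuous linear maps. -/
lemma aux_condexp_clm {α E F : Type*} [NormedAddCommGroup E] [NormedSpace ℝ E] [CompleteSpace E]
    [NormedAddCommGroup F] [NormedSpace ℝ F] [CompleteSpace F]
    {m m0 : MeasurableSpace α} {μ : Measure α} [IsFiniteMeasure μ] (hm : m ≤ m0)
    (L : E →L[ℝ] F) {f : α → E} (hf : Integrable f μ) :
    (μ[fun ω => L (f ω)|m]) =ᵐ[μ] fun ω => L ((μ[f|m]) ω) := by
  refine (ae_eq_condExp_of_forall_setIntegral_eq hm (L.integrable_comp hf)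
    (fun s hs hμs => (L.integrable_comp integrable_condExp).integrableOn)
    (fun s hs hμs => ?_)
    ((L.continuous.comp_stronglyMeasurable stronglyMeasurable_condExp).aestronglyMeasurable)).symm
  rw [L.integral_comp_comm integrable_condExp.integrableOn,
    L.integral_comp_comm hf.integrableOn, setIntegral_condExp hm hf hs]

/-- If nonnegative integrable functions have summable integrals, they are a.e. summable. -/
lemma aux_ae_summable {α : Type*} {m0 : MeasurableSpace α} {μ : Measure α}
    (g : ℕ → α → ℝ) (hint : ∀ n, Integrable (g n) μ) (hnn : ∀ n, 0 ≤ᵐ[μ] g n)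
    (hsum : Summable fun n => ∫ ω, g n ω ∂μ) :
    ∀ᵐ ω ∂μ, Summable fun n => g n ω := by
  have hae : ∀ n, AEMeasurable (fun ω => ENNReal.ofReal (g n ω)) μ :=
    fun n => ENNReal.measurable_ofReal.comp_aemeasurable (hint n).aemeasurable
  have hlt : ∫⁻ ω, ∑' n, ENNReal.ofReal (g n ω) ∂μ < ⊤ := by
    rw [lintegral_tsum hae]
    have h1 : ∀ n, ∫⁻ ω, ENNReal.ofReal (g n ω) ∂μ = ENNReal.ofReal (∫ ω, g n ω ∂μ) :=
      fun n => (ofReal_integral_eq_lintegral_ofReal (hint n) (hnn n)).symm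
    simp_rw [h1]
    rw [← ENNReal.ofReal_tsum_of_nonneg (fun n => integral_nonneg_of_ae (hnn n)) hsum]
    exact ENNReal.ofReal_lt_top
  have h2 : ∀ᵐ ω ∂μ, ∑' n, ENNReal.ofReal (g n ω) < ⊤ :=
    ae_lt_top' (AEMeasurable.ennreal_tsum hae) hlt.ne
  filter_upwards [h2, ae_all_iff.2 hnn] with ω hω hnn'
  have := ENNReal.summable_toReal hω.ne
  refine this.congr fun n => ?_
  simp [ENNReal.toReal_ofReal (hnn' n)]

/-- Deterministic part of the argument, per sample path. -/
lemma aux_real (lam : ℕ → ℝ) (hlam : ∀ t, 1 ≤ t → 0 < lam t ∧ lam t ≤ 1)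
    (hdiv : Tendsto (fun T => ∑ t ∈ Finset.Icc 1 T, (1 - lam t)) atTop atTop)
    (v w : ℕ → ℝ) (hv : ∀ n, 0 ≤ v n) (hw0 : ∀ j, 0 ≤ w j) (hwsum : Summable w)
    (hconv : ∃ l, Tendsto (fun n => v (n+1)
      + (∑ j ∈ Finset.range n, (1 - lam (j+2)^2) * v (j+1))
      - ∑ j ∈ Finset.range n, w j) atTop (𝓝 l)) :
    Tendsto v atTop (𝓝 0) := by
  obtain ⟨l, hl⟩ := hconv
  set a : ℕ → ℝ := fun j => (1 - lam (j+2)^2) * v (j+1) with ha_def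
  have hlam' : ∀ j : ℕ, 0 < lam (j+2) ∧ lam (j+2) ≤ 1 := fun j => hlam _ (by omega)
  have ha0 : ∀ j, 0 ≤ a j := by
    intro j
    have h := hlam' j
    have : lam (j+2)^2 ≤ 1 := by nlinarith [h.1, h.2]
    exact mul_nonneg (by linarith) (hv _)
  set A : ℕ → ℝ := fun n => ∑ j ∈ Finset.range n, a j with hA_def
  have hAmono : Monotone A := fun m n hmn =>
    Finset.sum_le_sum_of_subset_of_nonneg (Finset.range_subset_range.2 hmn) fun j _ _ => ha0 j
  have hS : Tendsto (fun n => ∑ j ∈ Finset.range n, w j) atTop (𝓝 (∑' j, w j)) :=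
    hwsum.hasSum.tendsto_sum_nat
  have hg : Tendsto (fun n => v (n+1) + A n) atTop (𝓝 (l + ∑' j, w j)) := by
    have := hl.add hS
    refine this.congr fun n => by ring
  -- A is bounded above, hence converges
  have hAbdd : BddAbove (Set.range A) := by
    obtain ⟨B, hB⟩ := hg.bddAbove_range
    refine ⟨B, fun x hx => ?_⟩
    obtain ⟨n, rfl⟩ := hx
    have : v (n+1) + A n ≤ B := hB ⟨n, rfl⟩
    have := hv (n+1)
    linarith
  have hA : Tendsto A atTop (𝓝 (⨆ n, A n)) := tendsto_atTop_ciSup hAmono hAbdd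
  have hvlim : Tendsto (fun n => v (n+1)) atTop (𝓝 (l + ∑' j, w j - ⨆ n, A n)) := by
    have := hg.sub hA
    refine this.congr fun n => by ring
  set L : ℝ := l + ∑' j, w j - ⨆ n, A n with hL_def
  have hL0 : 0 ≤ L := ge_of_tendsto' hvlim fun n => hv (n+1)
  -- a is summable
  have hasum : Summable a := by
    refine summable_of_sum_range_le (c := ⨆ n, A n) ha0 fun n => ?_
    exact le_ciSup hAbdd n
  -- L must be zero
  have hLzero : L = 0 := by
    by_contra hne
    have hLpos : 0 < L := lt_of_le_of_ne hL0 (Ne.symm hne)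
    have hev : ∀ᶠ n in atTop, L/2 ≤ v (n+1) :=
      hvlim.eventually (eventually_ge_nhds (by linarith : L/2 < L))
    obtain ⟨N, hN⟩ := eventually_atTop.1 hev
    have hcomp : Summable fun j => (1 - lam (j+N+2)) * (L/2) := by
      have h1 : Summable fun j => a (j+N) := (summable_nat_add_iff N).2 hasum
      refine h1.of_nonneg_of_le (fun j => ?_) (fun j => ?_)
      · have h := hlam' (j+N)
        exact mul_nonneg (by linarith [h.2]) (by linarith)
      · have h := hlam' (j+N)
        have h2 : 1 - lam (j+N+2) ≤ 1 - lam (j+N+2)^2 := by nlinarith [h.1, h.2]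
        have h3 : L/2 ≤ v (j+N+1) := hN (j+N) (by omega)
        have h4 : 0 ≤ 1 - lam (j+N+2)^2 := by nlinarith [h.1, h.2]
        calc (1 - lam (j+N+2)) * (L/2) ≤ (1 - lam (j+N+2)^2) * (L/2) := by
              apply mul_le_mul_of_nonneg_right h2 (by linarith)
          _ ≤ (1 - lam (j+N+2)^2) * v (j+N+1) := by
              apply mul_le_mul_of_nonneg_left h3 h4
          _ = a (j+N) := rfl
    have hsum2 : Summable fun j => 1 - lam (j+N+2) :=
      (summable_mul_right_iff (by positivity : L/2 ≠ 0)).1 hcomp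
    have hsum3 : Summable fun t => 1 - lam t := by
      have : (fun j => 1 - lam (j+N+2)) = fun j => (fun t => 1 - lam t) (j + (N+2)) := by
        funext j; ring_nf
      rw [this] at hsum2
      exact (summable_nat_add_iff (N+2)).1 hsum2
    have hsum4 : Summable fun k : ℕ => 1 - lam (k+1) := (summable_nat_add_iff 1).2 hsum3
    have hnn4 : ∀ k : ℕ, 0 ≤ 1 - lam (k+1) := fun k => by
      have := (hlam (k+1) (by omega)).2; linarith
    have hbd : ∀ T : ℕ, ∑ t ∈ Finset.Icc 1 T, (1 - lam t) ≤ ∑' k : ℕ, (1 - lam (k+1)) := by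
      intro T
      have he : ∑ t ∈ Finset.Icc 1 T, (1 - lam t) = ∑ k ∈ Finset.range T, (1 - lam (k+1)) := by
        rw [show Finset.Icc 1 T = Finset.Ico 1 (T+1) from by rw [Finset.Ico_add_one_right_eq_Icc],
          Finset.sum_Ico_eq_sum_range]
        simp [add_comm]
      rw [he]
      exact hsum4.sum_le_tsum _ (fun k _ => hnn4 k)
    obtain ⟨T, hT⟩ := (hdiv.eventually_gt_atTop (∑' k : ℕ, (1 - lam (k+1)))).exists
    exact absurd (hbd T) (not_le.2 hT)
  rw [hLzero] at hvlim
  exact (tendsto_add_atTop_iff_nat 1).1 hvlim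

lemma aux_coord_le {d : ℕ} (x : EuclideanSpace ℝ (Fin d)) (i : Fin d) : |x i| ≤ ‖x‖ := by
  rw [EuclideanSpace.norm_eq x]
  refine (Real.le_sqrt (abs_nonneg _) (Finset.sum_nonneg fun j _ => sq_nonneg _)).2 ?_
  rw [sq_abs]
  simp only [Real.norm_eq_abs, sq_abs]
  exact Finset.single_le_sum (f := fun j => x j ^ 2) (fun j _ => sq_nonneg _) (Finset.mem_univ i)

/-- Stochastic contraction mapping theorem (contraction part): let `(Z_t)` be integrable
random vectors in `ℝ^d`, `ℱ_t = σ(Z_1, …, Z_t)`, `ε_t = Z_t - E[Z_t | ℱ_{t-1}]`, and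
`0 < λ_t ≤ 1` with `∑ (1 - λ_t) = ∞`.  If `‖E[Z_t | ℱ_{t-1}]‖ ≤ λ_t ‖Z_{t-1}‖` a.s., the
deviations are uniformly bounded by constants `c_t → 0`, and `∑ E[‖ε_t‖²] < ∞`, then
`Z_t → 0` almost surely. -/
theorem stochastic_contraction {Ω : Type*} [MeasurableSpace Ω]
    (μ : Measure Ω) [IsProbabilityMeasure μ]
    (d : ℕ) (hd : 1 ≤ d)
    (Z : ℕ → Ω → EuclideanSpace ℝ (Fin d))
    (hZmeas : ∀ t, Measurable (Z t))
    (hZint : ∀ t, Integrable (Z t) μ)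
    (F : ℕ → MeasurableSpace Ω)
    (hF : ∀ t, F t = ⨆ s ∈ Set.Icc 1 t, MeasurableSpace.comap (Z s) inferInstance)
    (lam : ℕ → ℝ)
    (hlam : ∀ t, 1 ≤ t → 0 < lam t ∧ lam t ≤ 1)
    (hdiv : Tendsto (fun T => ∑ t ∈ Finset.Icc 1 T, (1 - lam t)) atTop atTop)
    (ε : ℕ → Ω → EuclideanSpace ℝ (Fin d))
    (hε : ∀ t, ε t = fun ω => Z t ω - (μ[Z t | F (t - 1)]) ω)
    (hmean : ∀ t, 1 ≤ t → ∀ᵐ ω ∂μ, ‖(μ[Z t | F (t - 1)]) ω‖ ≤ lam t * ‖Z (t - 1) ω‖)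
    (c : ℕ → ℝ) (hc : Tendsto c atTop (nhds 0))
    (hdev : ∀ t, 1 ≤ t → ∀ᵐ ω ∂μ, ‖ε t ω‖ ≤ c t)
    (hsq : Summable fun t : ℕ => ∫ ω, ‖ε (t + 1) ω‖ ^ 2 ∂μ) :
    ∀ᵐ ω ∂μ, Tendsto (fun t => Z t ω) atTop (nhds 0) := by
  -- basic facts about the filtration
  have hFle : ∀ t, F t ≤ ‹MeasurableSpace Ω› := by
    intro t; rw [hF]
    exact iSup₂_le fun s _ => (hZmeas s).comap_le
  have hFmono : Monotone F := by
    intro s t hst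
    rw [hF, hF]
    refine iSup₂_le fun u hu => le_iSup₂_of_le u ?_ le_rfl
    rw [Set.mem_Icc] at hu ⊢
    exact ⟨hu.1, hu.2.trans hst⟩
  have hZad : ∀ t, 1 ≤ t → StronglyMeasurable[F t] (Z t) := by
    intro t ht
    refine Measurable.stronglyMeasurable ?_
    rw [measurable_iff_comap_le, hF]
    exact le_biSup (f := fun s => MeasurableSpace.comap (Z s) inferInstance)
      (Set.mem_Icc.mpr ⟨ht, le_rfl⟩)
  -- notation
  set U : ℕ → Ω → EuclideanSpace ℝ (Fin d) := fun t => μ[Z t | F (t-1)] with hU_def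
  have hZsplit : ∀ t, Z t = fun ω => U t ω + ε t ω := by
    intro t; funext ω; rw [hε t]; simp [hU_def]
  have hεint : ∀ t, Integrable (ε t) μ := by
    intro t; rw [hε t]; exact (hZint t).sub integrable_condExp
  -- a.e. boundedness of the Z t, t ≥ 1
  have hF0 : F 0 = ⊥ := by
    rw [hF]
    simp [Set.Icc_eq_empty_of_lt (by norm_num : (0:ℕ) < 1)]
  have hbd : ∀ t, 1 ≤ t → ∃ D : ℝ, 0 ≤ D ∧ ∀ᵐ ω ∂μ, ‖Z t ω‖ ≤ D := by
    intro t ht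
    induction t, ht using Nat.le_induction with
    | base =>
      refine ⟨‖∫ ω, Z 1 ω ∂μ‖ + max (c 1) 0, by positivity, ?_⟩
      filter_upwards [hdev 1 le_rfl] with ω hω
      have h1 : Z 1 ω = U 1 ω + ε 1 ω := congrFun (hZsplit 1) ω
      have h2 : U 1 ω = ∫ ω', Z 1 ω' ∂μ := by
        have : U 1 = μ[Z 1|⊥] := by rw [hU_def]; norm_num [hF0]
        rw [this, condExp_bot]
      calc ‖Z 1 ω‖ ≤ ‖U 1 ω‖ + ‖ε 1 ω‖ := h1 ▸ norm_add_le _ _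
        _ ≤ ‖∫ ω', Z 1 ω' ∂μ‖ + max (c 1) 0 := by
            rw [h2]; exact add_le_add le_rfl (hω.trans (le_max_left _ _))
    | succ t ht ih =>
      obtain ⟨D, hD0, hD⟩ := ih
      refine ⟨D + max (c (t+1)) 0, by positivity, ?_⟩
      filter_upwards [hdev (t+1) (by omega), hmean (t+1) (by omega), hD] with ω h1 h2 h3
      have h4 : Z (t+1) ω = U (t+1) ω + ε (t+1) ω := congrFun (hZsplit (t+1)) ω
      have hl := hlam (t+1) (by omega)
      calc ‖Z (t+1) ω‖ ≤ ‖U (t+1) ω‖ + ‖ε (t+1) ω‖ := h4 ▸ norm_add_le _ _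
        _ ≤ lam (t+1) * ‖Z t ω‖ + max (c (t+1)) 0 := by
            refine add_le_add ?_ (h1.trans (le_max_left _ _))
            simpa [hU_def] using h2
        _ ≤ D + max (c (t+1)) 0 := by
            have : lam (t+1) * ‖Z t ω‖ ≤ 1 * D := by
              refine mul_le_mul hl.2 (by simpa using h3) (norm_nonneg _) zero_le_one
            linarith
  -- the squared process and the conditional variances
  set V : ℕ → Ω → ℝ := fun t ω => ‖Z t ω‖^2 with hV_def
  set Wf : ℕ → Ω → ℝ := fun t => μ[fun ω => ‖ε t ω‖^2|F (t-1)] with hW_def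
  have hVnn : ∀ t ω, 0 ≤ V t ω := fun t ω => sq_nonneg _
  have hVint : ∀ t, 1 ≤ t → Integrable (V t) μ := by
    intro t ht
    obtain ⟨D, hD0, hD⟩ := hbd t ht
    refine Integrable.mono' (integrable_const (D^2))
      ((hZmeas t).norm.pow_const 2).aestronglyMeasurable ?_
    filter_upwards [hD] with ω hω
    rw [Real.norm_eq_abs, abs_of_nonneg (hVnn t ω)]
    exact pow_le_pow_left₀ (norm_nonneg _) hω 2
  have hVmeasF : ∀ t, 1 ≤ t → StronglyMeasurable[F t] (V t) := by
    intro t ht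
    have h := (hZad t ht).norm
    exact h.pow 2
  have hεmeas : ∀ t, StronglyMeasurable (ε t) := by
    intro t
    rw [hε t]
    exact (hZmeas t).stronglyMeasurable.sub (stronglyMeasurable_condExp.mono (hFle _))
  have hcnn : ∀ t, 1 ≤ t → 0 ≤ c t := by
    intro t ht
    have h := (hdev t ht).and (ae_of_all μ fun ω => norm_nonneg (ε t ω))
    obtain ⟨ω, h1, h2⟩ := h.exists
    linarith
  have hεsqint : ∀ t, 1 ≤ t → Integrable (fun ω => ‖ε t ω‖^2) μ := by
    intro t ht
    refine Integrable.mono' (integrable_const ((c t)^2))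
      ((hεmeas t).norm.pow 2).aestronglyMeasurable ?_
    filter_upwards [hdev t ht] with ω hω
    rw [Real.norm_eq_abs, abs_of_nonneg (sq_nonneg _)]
    exact pow_le_pow_left₀ (norm_nonneg _) hω 2
  have hWint : ∀ t, Integrable (Wf t) μ := fun t => integrable_condExp
  have hWnn : ∀ t, 0 ≤ᵐ[μ] Wf t := fun t =>
    condExp_nonneg (Eventually.of_forall fun ω => sq_nonneg _)
  have hWmeasF : ∀ t, StronglyMeasurable[F (t-1)] (Wf t) := fun t => stronglyMeasurable_condExp
  have hWig : ∀ t, 1 ≤ t → ∫ ω, Wf t ω ∂μ = ∫ ω, ‖ε t ω‖^2 ∂μ := by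
    intro t ht
    exact integral_condExp (hFle _)
  -- the key conditional inequality
  have hkey : ∀ t, 2 ≤ t →
      (μ[V t|F (t-1)]) ≤ᵐ[μ] fun ω => lam t^2 * V (t-1) ω + Wf t ω := by
    intro t ht
    have ht1 : (1:ℕ) ≤ t := by omega
    have hG : F (t-1) ≤ ‹MeasurableSpace Ω› := hFle _
    obtain ⟨D, hD0, hD⟩ := hbd (t-1) (by omega)
    have hUm : StronglyMeasurable[F (t-1)] (U t) := stronglyMeasurable_condExp
    have hUm0 : StronglyMeasurable (U t) := hUm.mono hG
    have hUbd : ∀ᵐ ω ∂μ, ‖U t ω‖ ≤ D := by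
      filter_upwards [hmean t ht1, hD] with ω h1 h2
      have hl := hlam t ht1
      calc ‖U t ω‖ ≤ lam t * ‖Z (t-1) ω‖ := h1
        _ ≤ 1 * D := mul_le_mul hl.2 h2 (norm_nonneg _) zero_le_one
        _ = D := one_mul D
    -- integrability of the three pieces
    have hUsq_int : Integrable (fun ω => ‖U t ω‖^2) μ := by
      refine Integrable.mono' (integrable_const (D^2))
        (hUm0.norm.pow 2).aestronglyMeasurable ?_
      filter_upwards [hUbd] with ω hω
      rw [Real.norm_eq_abs, abs_of_nonneg (sq_nonneg _)]
      exact pow_le_pow_left₀ (norm_nonneg _) hω 2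
    have hcoord_int : ∀ i : Fin d, Integrable (fun ω => U t ω i * ε t ω i) μ := by
      intro i
      refine Integrable.mono' (integrable_const (D * c t))
        (((EuclideanSpace.proj (𝕜 := ℝ) i).continuous.comp_stronglyMeasurable hUm0).mul
          ((EuclideanSpace.proj (𝕜 := ℝ) i).continuous.comp_stronglyMeasurable
            (hεmeas t))).aestronglyMeasurable ?_
      filter_upwards [hUbd, hdev t ht1] with ω h1 h2
      rw [Real.norm_eq_abs, abs_mul]
      refine mul_le_mul ((aux_coord_le _ i).trans h1) ((aux_coord_le _ i).trans h2)
        (abs_nonneg _) hD0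
    have hcoordε_int : ∀ i : Fin d, Integrable (fun ω => ε t ω i) μ := by
      intro i
      refine Integrable.mono' (integrable_const (c t))
        ((EuclideanSpace.proj (𝕜 := ℝ) i).continuous.comp_stronglyMeasurable
          (hεmeas t)).aestronglyMeasurable ?_
      filter_upwards [hdev t ht1] with ω h2
      exact (aux_coord_le _ i).trans h2
    -- the conditional expectation of ε t vanishes
    have hε0 : (μ[ε t|F (t-1)]) =ᵐ[μ] 0 := by
      have h1 : (μ[ε t|F (t-1)]) =ᵐ[μ] μ[Z t|F (t-1)] - μ[U t|F (t-1)] := by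
        have : ε t = Z t - U t := by funext ω; rw [hε t]; rfl
        rw [this]
        exact condExp_sub (m := F (t-1)) (hZint t) integrable_condExp
      have h2 : μ[U t|F (t-1)] = U t :=
        condExp_of_stronglyMeasurable hG hUm integrable_condExp
      refine h1.trans ?_
      rw [h2]
      simp [hU_def]
    -- each coordinate of the conditional expectation of ε t vanishes
    have hε0i : ∀ i : Fin d, (μ[fun ω => ε t ω i|F (t-1)]) =ᵐ[μ] 0 := by
      intro i
      have h1 := aux_condexp_clm hG (EuclideanSpace.proj (𝕜 := ℝ) i) (hεint t)
      refine h1.trans ?_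
      filter_upwards [hε0] with ω hω
      simp only [hω]
      simp
    -- the cross term vanishes
    have hcross0 : (μ[fun ω => (inner ℝ (U t ω) (ε t ω) : ℝ)|F (t-1)]) =ᵐ[μ] 0 := by
      have hrw : (fun ω => (inner ℝ (U t ω) (ε t ω) : ℝ))
          = ∑ i : Fin d, fun ω => U t ω i * ε t ω i := by
        funext ω
        simp [PiLp.inner_apply, RCLike.inner_apply, conj_trivial, mul_comm]
      rw [hrw]
      refine (condExp_finsetSum (m := F (t-1)) fun i _ => hcoord_int i).trans ?_
      have h2 : ∀ i : Fin d, (μ[fun ω => U t ω i * ε t ω i|F (t-1)]) =ᵐ[μ] 0 := by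
        intro i
        have hm : StronglyMeasurable[F (t-1)] (fun ω => U t ω i) :=
          (EuclideanSpace.proj (𝕜 := ℝ) i).continuous.comp_stronglyMeasurable hUm
        have h3 := condExp_mul_of_stronglyMeasurable_left hm (hcoord_int i) (hcoordε_int i)
        refine h3.trans ?_
        filter_upwards [hε0i i] with ω hω
        simp only [Pi.mul_apply, hω, Pi.zero_apply, mul_zero]
      have h5 : ∀ᵐ ω ∂μ, ∀ i : Fin d, (μ[fun ω' => U t ω' i * ε t ω' i|F (t-1)]) ω = 0 := by
        rw [ae_all_iff]
        exact fun i => h2 i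
      filter_upwards [h5] with ω hω
      simp only [Finset.sum_apply, Pi.zero_apply]
      exact Finset.sum_eq_zero fun i _ => hω i
    -- expansion of V t
    have hexp : V t = (fun ω => ‖U t ω‖^2) + ((fun ω => 2 * (inner ℝ (U t ω) (ε t ω) : ℝ))
        + fun ω => ‖ε t ω‖^2) := by
      funext ω
      have h1 : Z t ω = U t ω + ε t ω := congrFun (hZsplit t) ω
      show ‖Z t ω‖^2 = _
      simp only [Pi.add_apply, h1]
      rw [norm_add_sq_real]
      ring
    have hcross_int : Integrable (fun ω => 2 * (inner ℝ (U t ω) (ε t ω) : ℝ)) μ := by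
      have hrw : (fun ω => (2:ℝ) * (inner ℝ (U t ω) (ε t ω) : ℝ))
          = fun ω => ∑ i : Fin d, 2 * (U t ω i * ε t ω i) := by
        funext ω
        simp [PiLp.inner_apply, RCLike.inner_apply, conj_trivial, Finset.mul_sum, mul_comm]
      rw [hrw]
      exact integrable_finset_sum _ fun i _ => (hcoord_int i).const_mul 2
    -- put everything together
    have hce : (μ[V t|F (t-1)]) =ᵐ[μ] fun ω => ‖U t ω‖^2 + Wf t ω := by
      rw [hexp]
      refine (condExp_add (m := F (t-1)) hUsq_int (hcross_int.add (hεsqint t ht1))).trans ?_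
      have h1 : μ[(fun ω => ‖U t ω‖^2)|F (t-1)] = fun ω => ‖U t ω‖^2 :=
        condExp_of_stronglyMeasurable hG (hUm.norm.pow 2) hUsq_int
      have h2 : (μ[(fun ω => 2 * (inner ℝ (U t ω) (ε t ω) : ℝ)) + (fun ω => ‖ε t ω‖^2)|F (t-1)])
          =ᵐ[μ] fun ω => Wf t ω := by
        refine (condExp_add (m := F (t-1)) hcross_int (hεsqint t ht1)).trans ?_
        have h3 : (μ[fun ω => 2 * (inner ℝ (U t ω) (ε t ω) : ℝ)|F (t-1)]) =ᵐ[μ] 0 := by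
          have h4 : (fun ω => (2:ℝ) * (inner ℝ (U t ω) (ε t ω) : ℝ))
              = (2:ℝ) • fun ω => (inner ℝ (U t ω) (ε t ω) : ℝ) := by
            funext ω; simp
          rw [h4]
          refine (condExp_smul (2:ℝ) _ (F (t-1))).trans ?_
          filter_upwards [hcross0] with ω hω
          simp only [Pi.smul_apply, hω, Pi.zero_apply, smul_eq_mul, mul_zero]
        filter_upwards [h3] with ω hω
        simp only [Pi.add_apply, hω, Pi.zero_apply, zero_add, hW_def]
      rw [h1]
      filter_upwards [h2] with ω hω
      simp only [Pi.add_apply] at hω ⊢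
      rw [hω]
    refine hce.le.trans ?_
    filter_upwards [hmean t ht1] with ω h1
    have hl := hlam t ht1
    have h2 : ‖U t ω‖^2 ≤ (lam t * ‖Z (t-1) ω‖)^2 :=
      pow_le_pow_left₀ (norm_nonneg _) h1 2
    have h3 : (lam t * ‖Z (t-1) ω‖)^2 = lam t^2 * V (t-1) ω := by
      simp only [hV_def]; ring
    linarith
  -- the shifted filtration
  set 𝒢 : Filtration ℕ ‹MeasurableSpace Ω› :=
    ⟨fun n => F (n+1), fun m n hmn => hFmono (Nat.add_le_add_right hmn 1),
      fun n => hFle _⟩ with h𝒢_def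
  -- compensator and sums
  set A : ℕ → Ω → ℝ := fun t ω => ∑ j ∈ Finset.range (t-1), (1 - lam (j+2)^2) * V (j+1) ω
    with hA_def
  set Sf : ℕ → Ω → ℝ := fun t ω => ∑ j ∈ Finset.range (t-1), Wf (j+2) ω with hSf_def
  set f : ℕ → Ω → ℝ := fun n ω => V (n+1) ω + A (n+1) ω - Sf (n+1) ω with hf_def
  have hl2nn : ∀ j : ℕ, 0 ≤ 1 - lam (j+2)^2 := by
    intro j
    have h := hlam (j+2) (by omega)
    nlinarith [h.1, h.2]
  have hAnn : ∀ t ω, 0 ≤ A t ω := fun t ω =>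
    Finset.sum_nonneg fun j _ => mul_nonneg (hl2nn j) (hVnn _ ω)
  have hAint : ∀ t, Integrable (A t) μ := fun t =>
    integrable_finset_sum _ fun j _ => (hVint (j+1) (by omega)).const_mul _
  have hSfint : ∀ t, Integrable (Sf t) μ := fun t =>
    integrable_finset_sum _ fun j _ => hWint (j+2)
  have hfint : ∀ n, Integrable (f n) μ := fun n =>
    ((hVint (n+1) (by omega)).add (hAint (n+1))).sub (hSfint (n+1))
  -- adaptedness
  have hAdap : StronglyAdapted 𝒢 f := by
    intro n
    have hV1 : StronglyMeasurable[F (n+1)] (V (n+1)) := hVmeasF (n+1) (by omega)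
    have hA1 : StronglyMeasurable[F (n+1)] (A (n+1)) := by
      refine Finset.stronglyMeasurable_fun_sum _ fun j hj => ?_
      have hj' : j + 1 ≤ n + 1 := by
        have := Finset.mem_range.1 hj; omega
      exact ((hVmeasF (j+1) (by omega)).mono (hFmono hj')).const_mul _
    have hS1 : StronglyMeasurable[F (n+1)] (Sf (n+1)) := by
      refine Finset.stronglyMeasurable_fun_sum _ fun j hj => ?_
      have hj' : j + 1 ≤ n + 1 := by
        have := Finset.mem_range.1 hj; omega
      exact (hWmeasF (j+2)).mono (hFmono hj')
    exact (hV1.add hA1).sub hS1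
  -- one-step supermartingale inequality
  have hstep : ∀ n, (μ[f (n+1)|𝒢 n]) ≤ᵐ[μ] f n := by
    intro n
    have hG : F (n+1) ≤ ‹MeasurableSpace Ω› := hFle _
    set g : Ω → ℝ := fun ω => A (n+1) ω + (1 - lam (n+2)^2) * V (n+1) ω
      - Sf (n+1) ω - Wf (n+2) ω with hg_def
    have hgm : StronglyMeasurable[F (n+1)] g := by
      have hA1 : StronglyMeasurable[F (n+1)] (A (n+1)) := by
        refine Finset.stronglyMeasurable_fun_sum _ fun j hj => ?_
        have hj' : j + 1 ≤ n + 1 := by have := Finset.mem_range.1 hj; omega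
        exact ((hVmeasF (j+1) (by omega)).mono (hFmono hj')).const_mul _
      have hS1 : StronglyMeasurable[F (n+1)] (Sf (n+1)) := by
        refine Finset.stronglyMeasurable_fun_sum _ fun j hj => ?_
        have hj' : j + 1 ≤ n + 1 := by have := Finset.mem_range.1 hj; omega
        exact (hWmeasF (j+2)).mono (hFmono hj')
      exact ((hA1.add ((hVmeasF (n+1) (by omega)).const_mul _)).sub hS1).sub (hWmeasF (n+2))
    have hgint : Integrable g μ :=
      (((hAint (n+1)).add ((hVint (n+1) (by omega)).const_mul _)).sub (hSfint (n+1))).sub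
        (hWint (n+2))
    have hdecomp : f (n+1) = fun ω => V (n+2) ω + g ω := by
      funext ω
      simp only [hf_def, hg_def, hA_def, hSf_def]
      rw [show (n+1+1)-1 = n+1 from rfl, show (n+1)-1 = n from rfl,
        Finset.sum_range_succ, Finset.sum_range_succ]
      ring
    have h1 : (μ[f (n+1)|F (n+1)]) =ᵐ[μ] fun ω => (μ[V (n+2)|F (n+1)]) ω + g ω := by
      rw [hdecomp]
      have h2 := condExp_add (μ := μ) (m := F (n+1)) (hVint (n+2) (by omega)) hgint
      refine h2.trans ?_
      rw [condExp_of_stronglyMeasurable hG hgm hgint]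
      filter_upwards with ω
      simp
    show (μ[f (n+1)|F (n+1)]) ≤ᵐ[μ] f n
    refine h1.le.trans ?_
    have h3 := hkey (n+2) (by omega)
    rw [show (n+2)-1 = n+1 from rfl] at h3
    filter_upwards [h3] with ω h4
    simp only [hf_def, hg_def]
    have h5 : (μ[V (n+2)|F (n+1)]) ω ≤ lam (n+2)^2 * V (n+1) ω + Wf (n+2) ω := h4
    linarith
  have hsuper : Supermartingale f 𝒢 μ := supermartingale_nat hAdap hfint hstep
  -- L¹ boundedness
  have hKsum : Summable (fun j : ℕ => ∫ ω, ‖ε (j+2) ω‖^2 ∂μ) := by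
    have h1 := (summable_nat_add_iff (f := fun t : ℕ => ∫ ω, ‖ε (t+1) ω‖^2 ∂μ) 1).2 hsq
    refine h1.congr fun j => ?_
    norm_num
  set K : ℝ := ∑' j : ℕ, ∫ ω, ‖ε (j+2) ω‖^2 ∂μ with hK_def
  have hSfb : ∀ t, ∫ ω, Sf t ω ∂μ ≤ K := by
    intro t
    rw [hSf_def]
    rw [integral_finset_sum _ fun j _ => hWint (j+2)]
    have h1 : ∀ j ∈ Finset.range (t-1), ∫ ω, Wf (j+2) ω ∂μ = ∫ ω, ‖ε (j+2) ω‖^2 ∂μ :=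
      fun j _ => hWig (j+2) (by omega)
    rw [Finset.sum_congr rfl h1]
    exact hKsum.sum_le_tsum _ (fun j _ => integral_nonneg fun ω => sq_nonneg _)
  have hSfnn_ae : ∀ᵐ ω ∂μ, ∀ j : ℕ, 0 ≤ Wf (j+2) ω := ae_all_iff.2 fun j => hWnn (j+2)
  have hEfle : ∀ n, ∫ ω, f n ω ∂μ ≤ ∫ ω, f 0 ω ∂μ := by
    intro n
    have h1 := hsuper.2.1 0 n (Nat.zero_le n)
    calc ∫ ω, f n ω ∂μ = ∫ ω, (μ[f n|𝒢 0]) ω ∂μ := (integral_condExp (𝒢.le 0)).symm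
      _ ≤ ∫ ω, f 0 ω ∂μ := integral_mono_ae integrable_condExp (hfint 0) h1
  set B : ℝ := ∫ ω, f 0 ω ∂μ + 2 * K with hB_def
  have hL1 : ∀ n, eLpNorm (f n) 1 μ ≤ ENNReal.ofReal B := by
    intro n
    have habs : ∀ᵐ ω ∂μ, ‖f n ω‖ ≤ V (n+1) ω + A (n+1) ω + Sf (n+1) ω := by
      filter_upwards [hSfnn_ae] with ω h1
      have hSnn : 0 ≤ Sf (n+1) ω := Finset.sum_nonneg fun j _ => h1 j
      rw [Real.norm_eq_abs, abs_le]
      constructor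
      · have := hVnn (n+1) ω; have := hAnn (n+1) ω
        simp only [hf_def]; linarith
      · simp only [hf_def]; linarith
    have hint1 : ∫ ω, ‖f n ω‖ ∂μ ≤ B := by
      have h2 : ∫ ω, ‖f n ω‖ ∂μ ≤ ∫ ω, (V (n+1) ω + A (n+1) ω + Sf (n+1) ω) ∂μ :=
        integral_mono_ae (hfint n).norm
          (((hVint (n+1) (by omega)).add (hAint (n+1))).add (hSfint (n+1))) habs
      have h3 : ∫ ω, (V (n+1) ω + A (n+1) ω + Sf (n+1) ω) ∂μ
          = ∫ ω, f n ω ∂μ + 2 * ∫ ω, Sf (n+1) ω ∂μ := by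
        rw [show (2:ℝ) * ∫ ω, Sf (n+1) ω ∂μ
            = ∫ ω, (2 * Sf (n+1) ω) ∂μ from (integral_const_mul 2 _).symm]
        rw [← integral_add (hfint n) ((hSfint (n+1)).const_mul 2)]
        refine integral_congr_ae (Eventually.of_forall fun ω => ?_)
        simp only [hf_def]; ring
      have h4 := hSfb (n+1)
      have h5 := hEfle n
      calc ∫ ω, ‖f n ω‖ ∂μ ≤ ∫ ω, f n ω ∂μ + 2 * ∫ ω, Sf (n+1) ω ∂μ := by
            rw [← h3]; exact h2
        _ ≤ ∫ ω, f 0 ω ∂μ + 2 * K := by linarith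
    calc eLpNorm (f n) 1 μ = ENNReal.ofReal (∫ ω, ‖f n ω‖ ∂μ) := by
          rw [eLpNorm_one_eq_lintegral_enorm,
            ← ofReal_integral_norm_eq_lintegral_enorm (hfint n)]
      _ ≤ ENNReal.ofReal B := ENNReal.ofReal_le_ofReal hint1
  -- almost sure convergence of the supermartingale
  have hsub : Submartingale (-f) 𝒢 μ := hsuper.neg
  have hL1' : ∀ n, eLpNorm ((-f) n) 1 μ ≤ ENNReal.ofReal B := by
    intro n
    rw [show (-f) n = -(f n) from rfl, eLpNorm_neg]
    exact hL1 n
  have hconv1 := hsub.ae_tendsto_limitProcess (R := (Real.toNNReal B))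
    (fun n => by simpa [ENNReal.ofReal] using hL1' n)
  -- a.s. summability of the conditional variances
  have hKsum' : Summable fun j : ℕ => ∫ ω, Wf (j+2) ω ∂μ :=
    hKsum.congr fun j => (hWig (j+2) (by omega)).symm
  have hWae := aux_ae_summable (fun j => Wf (j+2)) (fun j => hWint (j+2))
    (fun j => hWnn (j+2)) hKsum'
  -- conclude pointwise
  filter_upwards [hconv1, hWae, hSfnn_ae] with ω h1 h2 h3
  have hVconv : Tendsto (fun t => V t ω) atTop (𝓝 0) := by
    refine aux_real lam hlam hdiv (fun t => V t ω) (fun j => Wf (j+2) ω)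
      (fun t => hVnn t ω) h3 h2 ?_
    refine ⟨-(𝒢.limitProcess (-f) μ ω), ?_⟩
    have h4 : Tendsto (fun n => f n ω) atTop (𝓝 (-(𝒢.limitProcess (-f) μ ω))) := by
      have := h1.neg
      simp only [Pi.neg_apply, neg_neg] at this
      exact this
    refine h4.congr fun n => ?_
    simp only [hf_def, hA_def, hSf_def]
    norm_num
  rw [tendsto_zero_iff_norm_tendsto_zero]
  have h5 : Tendsto (fun t => Real.sqrt (V t ω)) atTop (𝓝 (Real.sqrt 0)) :=
    (Real.continuous_sqrt.tendsto 0).comp hVconv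
  rw [Real.sqrt_zero] at h5
  refine h5.congr fun t => ?_
  simp only [hV_def]
  exact Real.sqrt_sq (norm_nonneg _)
end

section
/- Let A be an n×n real matrix whose ℓ²→ℓ² operator norm is at most 1, let λ ∈ (0,1], q ∈ [0,1], and let y, y* ∈ ℝⁿ satisfy the fixed point equation y* = λ·A(y - q·y*). Then for every natural number b ≥ 1 and every u ∈ ℝⁿ, ‖((b-1)/b)·u + (λ/b)·A(y - q·u) - y*‖₂ ≤ ((b - 1 + λq)/b)·‖u - y*‖₂. -/
open Finset Matrix

/-- The Euclidean (ℓ²) norm of a vector in `ℝⁿ`. -/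
noncomputable def l2norm {n : ℕ} (v : Fin n → ℝ) : ℝ := Real.sqrt (∑ i, v i ^ 2)

lemma l2norm_eq_norm {n : ℕ} (v : Fin n → ℝ) :
    l2norm v = ‖(WithLp.equiv 2 (Fin n → ℝ)).symm v‖ := by
  rw [EuclideanSpace.norm_eq, l2norm]
  congr 1
  refine Finset.sum_congr rfl fun i _ => ?_
  rw [show (WithLp.equiv 2 (Fin n → ℝ)).symm v i = v i from rfl, Real.norm_eq_abs, sq_abs]

lemma l2norm_add_le {n : ℕ} (v w : Fin n → ℝ) :
    l2norm (v + w) ≤ l2norm v + l2norm w := by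
  simp only [l2norm_eq_norm]
  exact norm_add_le _ _

lemma l2norm_smul {n : ℕ} (c : ℝ) (v : Fin n → ℝ) :
    l2norm (c • v) = |c| * l2norm v := by
  simp only [l2norm_eq_norm]
  rw [show (WithLp.equiv 2 (Fin n → ℝ)).symm (c • v)
      = c • (WithLp.equiv 2 (Fin n → ℝ)).symm v from rfl]
  rw [norm_smul, Real.norm_eq_abs]

/-- Deterministic mean-contraction step of Boulevard-averaged boosting with dropout: if the
matrix `A` has ℓ²→ℓ² operator norm at most `1` and `y* = l·A(y - q·y*)`, then one Boulevard
update contracts the ℓ² distance to `y*` by the factor `(b - 1 + l·q)/b`. -/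
theorem boulevard_mean_contraction (n : ℕ) (A : Matrix (Fin n) (Fin n) ℝ)
    (hA : ∀ x : Fin n → ℝ, l2norm (A.mulVec x) ≤ l2norm x)
    (l q : ℝ) (hl0 : 0 < l) (hl1 : l ≤ 1) (hq0 : 0 ≤ q) (hq1 : q ≤ 1)
    (y ystar : Fin n → ℝ) (hfix : ystar = l • A.mulVec (y - q • ystar))
    (b : ℕ) (hb : 1 ≤ b) (u : Fin n → ℝ) :
    l2norm ((((b : ℝ) - 1) / b) • u + (l / b) • A.mulVec (y - q • u) - ystar) ≤
      (((b : ℝ) - 1 + l * q) / b) * l2norm (u - ystar) := by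
  have hbpos : (0:ℝ) < (b:ℝ) := by exact_mod_cast hb
  have hb1 : (0:ℝ) ≤ (b:ℝ) - 1 := by
    have : (1:ℝ) ≤ (b:ℝ) := by exact_mod_cast hb
    linarith
  -- rewrite the vector inside the norm
  have hvec : (((b : ℝ) - 1) / b) • u + (l / b) • A.mulVec (y - q • u) - ystar
      = (((b : ℝ) - 1) / b) • (u - ystar) + (l * q / b) • A.mulVec (ystar - u) := by
    have hsplit : y - q • u = (y - q • ystar) + q • (ystar - u) := by
      funext i
      simp only [Pi.sub_apply, Pi.add_apply, Pi.smul_apply, smul_eq_mul]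
      ring
    rw [hsplit, Matrix.mulVec_add, Matrix.mulVec_smul]
    have hfix' : A.mulVec (y - q • ystar) = l⁻¹ • ystar := by
      have h2 : l⁻¹ • ystar = l⁻¹ • (l • A.mulVec (y - q • ystar)) := by rw [← hfix]
      rw [h2, smul_smul, inv_mul_cancel₀ hl0.ne', one_smul]
    rw [hfix']
    funext i
    simp only [Pi.add_apply, Pi.sub_apply, Pi.smul_apply, smul_eq_mul]
    field_simp
    ring
  rw [hvec]
  calc l2norm ((((b : ℝ) - 1) / b) • (u - ystar) + (l * q / b) • A.mulVec (ystar - u))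
      ≤ l2norm ((((b : ℝ) - 1) / b) • (u - ystar)) + l2norm ((l * q / b) • A.mulVec (ystar - u)) :=
        l2norm_add_le _ _
    _ = (((b : ℝ) - 1) / b) * l2norm (u - ystar) + (l * q / b) * l2norm (A.mulVec (ystar - u)) := by
        rw [l2norm_smul, l2norm_smul, abs_of_nonneg (by positivity),
          abs_of_nonneg (by positivity)]
    _ ≤ (((b : ℝ) - 1) / b) * l2norm (u - ystar) + (l * q / b) * l2norm (ystar - u) := by
        gcongr
        exact hA _
    _ = (((b : ℝ) - 1 + l * q) / b) * l2norm (u - ystar) := by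
        have : l2norm (ystar - u) = l2norm (u - ystar) := by
          rw [show ystar - u = (-1 : ℝ) • (u - ystar) by funext i; simp [Pi.sub_apply],
            l2norm_smul]
          simp
        rw [this]; ring
end

section
/- Let (X, dist) be a metric space, z, z₁, …, z_n ∈ X, δ > 0, let K ≥ 2 be an integer and ξ ∈ (0,1). Let A be an n×n real matrix with nonnegative entries such that A_{ij} = 0 whenever dist(z_i, z_j) > δ, and whose every row sum is at most ξ/(2(K-1)). Let k ∈ ℝⁿ be nonnegative with ∑_j k_j ≤ 1 and k_j = 0 whenever dist(z, z_j) > δ. Define r ∈ ℝⁿ by rᵢ = ∑_j k_j (((1/K)I + ((K-1)/K)A)⁻¹)_{ji}, where the inverse exists since ‖(K-1)A‖ < 1 in the maximum-row-sum norm. Then for every natural number L ≥ 1, ∑_{i : dist(z, z_i) > L·δ} |rᵢ| ≤ K·(ξ/2)^L/(1 - ξ/2). -/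
open Finset Matrix

/-- Powers of a `δ`-banded matrix are `l·δ`-banded. -/
lemma bratp_band_pow {X : Type*} [MetricSpace X] {n : ℕ} (z : Fin n → X) {δ : ℝ}
    (C : Matrix (Fin n) (Fin n) ℝ)
    (hC : ∀ i j, δ < dist (z i) (z j) → C i j = 0) :
    ∀ (l : ℕ) (i j : Fin n), (l : ℝ) * δ < dist (z i) (z j) → (C ^ l) i j = 0 := by
  intro l
  induction l with
  | zero =>
    intro i j h
    simp only [Nat.cast_zero, zero_mul] at h
    have hij : i ≠ j := by
      rintro rfl
      simp at h
    simp [pow_zero, Matrix.one_apply_ne hij]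
  | succ l ih =>
    intro i j h
    rw [pow_succ', Matrix.mul_apply]
    apply Finset.sum_eq_zero
    intro m _
    by_cases hm : δ < dist (z i) (z m)
    · rw [hC i m hm, zero_mul]
    · push_neg at hm
      have htri := dist_triangle (z i) (z m) (z j)
      have : (l : ℝ) * δ < dist (z m) (z j) := by
        push_cast at h
        nlinarith
      rw [ih m j this, mul_zero]

/-- Powers of an entrywise nonnegative matrix are entrywise nonnegative. -/
lemma bratp_pow_nonneg {n : ℕ} (M : Matrix (Fin n) (Fin n) ℝ)
    (h : ∀ i j, 0 ≤ M i j) : ∀ (l : ℕ) (i j : Fin n), 0 ≤ (M ^ l) i j := by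
  intro l
  induction l with
  | zero =>
    intro i j
    rw [pow_zero, Matrix.one_apply]
    split <;> norm_num
  | succ l ih =>
    intro i j
    rw [pow_succ, Matrix.mul_apply]
    exact Finset.sum_nonneg fun m _ => mul_nonneg (ih i m) (h m j)

/-- Row sums of powers are bounded by the power of the row sum bound. -/
lemma bratp_pow_row_sum_le {n : ℕ} (M : Matrix (Fin n) (Fin n) ℝ)
    (h0 : ∀ i j, 0 ≤ M i j) {c : ℝ} (hc : 0 ≤ c) (hrow : ∀ i, ∑ j, M i j ≤ c) :
    ∀ (l : ℕ) (i : Fin n), ∑ j, (M ^ l) i j ≤ c ^ l := by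
  intro l
  induction l with
  | zero =>
    intro i
    simp [Matrix.one_apply]
  | succ l ih =>
    intro i
    rw [pow_succ']
    calc ∑ j, (M * M ^ l) i j = ∑ m, M i m * ∑ j, (M ^ l) m j := by
          simp only [Matrix.mul_apply, Finset.mul_sum]
          rw [Finset.sum_comm]
      _ ≤ ∑ m, M i m * c ^ l :=
          Finset.sum_le_sum fun m _ => mul_le_mul_of_nonneg_left (ih m) (h0 i m)
      _ = (∑ m, M i m) * c ^ l := by rw [Finset.sum_mul]
      _ ≤ c * c ^ l := mul_le_mul_of_nonneg_right (hrow i) (pow_nonneg hc l)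
      _ = c ^ (l + 1) := (pow_succ' c l).symm

set_option maxHeartbeats 1000000 in
/-- Exponential decay of the BRAT-P kernel ridge regression weights: with `K ≥ 2` trees per
round and subsample rate `ξ ∈ (0,1)`, if the banded nonnegative matrix `A` has all row sums at
most `ξ/(2(K-1))`, the nonnegative vector `k` has total mass at most `1` and is supported
within distance `δ` of the test point `z₀`, and
`rᵢ = ∑ⱼ kⱼ (((1/K) I + ((K-1)/K) A)⁻¹)ⱼᵢ`, then the total absolute weight placed on points
farther than `L·δ` from `z₀` is at most `K (ξ/2)^L / (1 - ξ/2)`. -/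
theorem sum_abs_parallel_krr_weights_far_le {X : Type*} [MetricSpace X] (n : ℕ)
    (z₀ : X) (z : Fin n → X) (δ : ℝ) (hδ : 0 < δ)
    (K : ℕ) (hK : 2 ≤ K) (ξ : ℝ) (hξ0 : 0 < ξ) (hξ1 : ξ < 1)
    (A : Matrix (Fin n) (Fin n) ℝ)
    (hA0 : ∀ i j, 0 ≤ A i j)
    (hAband : ∀ i j, δ < dist (z i) (z j) → A i j = 0)
    (hrow : ∀ i, ∑ j, A i j ≤ ξ / (2 * ((K : ℝ) - 1)))
    (k : Fin n → ℝ) (hk0 : ∀ j, 0 ≤ k j) (hk1 : ∑ j, k j ≤ 1)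
    (hkband : ∀ j, δ < dist z₀ (z j) → k j = 0)
    (r : Fin n → ℝ)
    (hr : ∀ i, r i = ∑ j, k j *
      ((1 / (K : ℝ)) • (1 : Matrix (Fin n) (Fin n) ℝ) + (((K : ℝ) - 1) / K) • A)⁻¹ j i)
    (L : ℕ) (hL : 1 ≤ L) :
    ∑ i ∈ Finset.univ.filter (fun i => (L : ℝ) * δ < dist z₀ (z i)), |r i| ≤
      (K : ℝ) * (ξ / 2) ^ L / (1 - ξ / 2) := by
  have hK1 : (1 : ℝ) ≤ (K : ℝ) - 1 := by
    have : (2 : ℝ) ≤ (K : ℝ) := by exact_mod_cast hK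
    linarith
  have hKpos : (0 : ℝ) < K := by linarith
  have hKne : (K : ℝ) ≠ 0 := ne_of_gt hKpos
  have hhalf0 : (0 : ℝ) < ξ / 2 := by linarith
  have hhalf1 : ξ / 2 < 1 := by linarith
  have hRHS : 0 ≤ (K : ℝ) * (ξ / 2) ^ L / (1 - ξ / 2) := by
    apply div_nonneg
    · positivity
    · linarith
  rcases Nat.eq_zero_or_pos n with hn | hn
  · subst hn
    simp [hRHS]
  haveI : Nonempty (Fin n) := Fin.pos_iff_nonempty.mp hn
  -- the rescaled matrix
  set M : Matrix (Fin n) (Fin n) ℝ := ((K : ℝ) - 1) • A with hM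
  have hM0 : ∀ i j, 0 ≤ M i j := fun i j =>
    mul_nonneg (by linarith) (hA0 i j)
  have hMrow : ∀ i, ∑ j, M i j ≤ ξ / 2 := by
    intro i
    have : ∑ j, M i j = ((K : ℝ) - 1) * ∑ j, A i j := by
      simp [hM, Finset.mul_sum]
    rw [this]
    have h1 : ((K : ℝ) - 1) * ∑ j, A i j ≤ ((K : ℝ) - 1) * (ξ / (2 * ((K : ℝ) - 1))) :=
      mul_le_mul_of_nonneg_left (hrow i) (by linarith)
    have h2 : ((K : ℝ) - 1) * (ξ / (2 * ((K : ℝ) - 1))) = ξ / 2 := by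
      field_simp
    linarith
  have hMband : ∀ i j, δ < dist (z i) (z j) → M i j = 0 := by
    intro i j h
    simp [hM, hAband i j h]
  have hnegMband : ∀ i j, δ < dist (z i) (z j) → (-M) i j = 0 := by
    intro i j h
    simp [hMband i j h]
  -- invertibility of 1 + M
  have hunit : IsUnit (1 + M).det := by
    rw [isUnit_iff_ne_zero]
    intro hdet
    obtain ⟨v, hv0, hv⟩ := Matrix.exists_mulVec_eq_zero_iff.2 hdet
    obtain ⟨j, -, hj⟩ := Finset.exists_max_image Finset.univ (fun m => |v m|) Finset.univ_nonempty
    have hvj : v j + ∑ m, M j m * v m = 0 := by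
      have := congrFun hv j
      simpa [Matrix.mulVec, dotProduct, Matrix.add_apply, Matrix.one_apply, Finset.sum_add_distrib,
        Finset.sum_ite_eq, add_mul] using this
    have hb : |v j| ≤ (ξ / 2) * |v j| := by
      have h1 : |v j| = |∑ m, M j m * v m| := by
        rw [show v j = -(∑ m, M j m * v m) by linarith, abs_neg]
      have h2 : |∑ m, M j m * v m| ≤ ∑ m, M j m * |v m| := by
        refine (Finset.abs_sum_le_sum_abs _ _).trans ?_
        refine Finset.sum_le_sum fun m _ => ?_
        rw [abs_mul, abs_of_nonneg (hM0 j m)]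
      have h3 : ∑ m, M j m * |v m| ≤ ∑ m, M j m * |v j| :=
        Finset.sum_le_sum fun m _ =>
          mul_le_mul_of_nonneg_left (hj m (Finset.mem_univ m)) (hM0 j m)
      have h4 : ∑ m, M j m * |v j| = (∑ m, M j m) * |v j| := by rw [Finset.sum_mul]
      have h5 : (∑ m, M j m) * |v j| ≤ (ξ / 2) * |v j| :=
        mul_le_mul_of_nonneg_right (hMrow j) (abs_nonneg _)
      linarith
    have hvj0 : |v j| = 0 := by nlinarith [abs_nonneg (v j)]
    apply hv0
    funext m
    have := hj m (Finset.mem_univ m)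
    have : |v m| = 0 := le_antisymm (by linarith) (abs_nonneg _)
    simpa [abs_eq_zero] using this
  set N : Matrix (Fin n) (Fin n) ℝ := (1 + M)⁻¹ with hN
  have hNid : (1 + M) * N = 1 := Matrix.mul_nonsing_inv _ hunit
  have hNid' : N * (1 + M) = 1 := Matrix.nonsing_inv_mul _ hunit
  -- row ℓ¹ bound on N
  set g : Fin n → ℝ := fun j => ∑ i, |N j i| with hg
  set s : ℝ := Finset.univ.sup' Finset.univ_nonempty g with hs
  have hgs : ∀ j, g j ≤ s := fun j => Finset.le_sup' g (Finset.mem_univ j)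
  have hs0 : 0 ≤ s := by
    obtain ⟨j⟩ := ‹Nonempty (Fin n)›
    exact le_trans (Finset.sum_nonneg fun i _ => abs_nonneg _) (hgs j)
  have hNeq : N = 1 - M * N := by
    have h1 : N + M * N = 1 := by
      calc N + M * N = (1 + M) * N := by noncomm_ring
        _ = 1 := hNid
    exact eq_sub_of_add_eq h1
  have hNentry : ∀ j i, |N j i| ≤ (if j = i then (1 : ℝ) else 0) + ∑ m, M j m * |N m i| := by
    intro j i
    have h1 : N j i = (if j = i then (1 : ℝ) else 0) - ∑ m, M j m * N m i := by
      conv_lhs => rw [hNeq]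
      simp [Matrix.sub_apply, Matrix.one_apply, Matrix.mul_apply]
    calc |N j i| ≤ |(if j = i then (1 : ℝ) else 0)| + |∑ m, M j m * N m i| := by
          rw [h1]; exact abs_sub _ _
      _ ≤ (if j = i then (1 : ℝ) else 0) + ∑ m, M j m * |N m i| := by
          gcongr
          · split <;> simp
          · refine (Finset.abs_sum_le_sum_abs _ _).trans ?_
            refine Finset.sum_le_sum fun m _ => ?_
            rw [abs_mul, abs_of_nonneg (hM0 j m)]
  have hsle : s ≤ 1 / (1 - ξ / 2) := by
    obtain ⟨j, -, hjs⟩ := Finset.exists_mem_eq_sup' Finset.univ_nonempty g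
    have hgj : g j ≤ 1 + (ξ / 2) * s := by
      calc g j = ∑ i, |N j i| := rfl
        _ ≤ ∑ i, ((if j = i then (1 : ℝ) else 0) + ∑ m, M j m * |N m i|) :=
            Finset.sum_le_sum fun i _ => hNentry j i
        _ = (∑ i, if j = i then (1 : ℝ) else 0) + ∑ i, ∑ m, M j m * |N m i| := by
            rw [Finset.sum_add_distrib]
        _ = 1 + ∑ m, M j m * g m := by
            rw [Finset.sum_ite_eq Finset.univ j (fun _ => (1:ℝ)), if_pos (Finset.mem_univ j)]
            congr 1
            rw [Finset.sum_comm]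
            simp [hg, Finset.mul_sum]
        _ ≤ 1 + ∑ m, M j m * s :=
            add_le_add_right (Finset.sum_le_sum fun m _ =>
              mul_le_mul_of_nonneg_left (hgs m) (hM0 j m)) 1
        _ = 1 + (∑ m, M j m) * s := by rw [Finset.sum_mul]
        _ ≤ 1 + (ξ / 2) * s :=
            add_le_add_right (mul_le_mul_of_nonneg_right (hMrow j) hs0) 1
    have hss : s ≤ 1 + (ξ / 2) * s := le_trans (le_of_eq (hs.trans hjs)) hgj
    rw [le_div_iff₀ (by linarith)]
    nlinarith
  -- Neumann decomposition
  set S : Matrix (Fin n) (Fin n) ℝ := ∑ l ∈ Finset.range L, (-M) ^ l with hSdef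
  have hgeom : S * (1 + M) = 1 - (-M) ^ L := by
    have h1 := geom_sum_mul (-M) L
    have h2 : S * (1 + M) = -(S * (-M - 1)) := by noncomm_ring
    rw [h2, hSdef, h1, neg_sub]
  set E : Matrix (Fin n) (Fin n) ℝ := (-M) ^ L * N with hEdef
  have hdecomp : N = S + E := by
    have h1 : (S + E) * (1 + M) = 1 := by
      rw [add_mul, hgeom, hEdef, mul_assoc, hNid']
      noncomm_ring
    calc N = 1 * N := (one_mul N).symm
      _ = ((S + E) * (1 + M)) * N := by rw [h1]
      _ = (S + E) * ((1 + M) * N) := by rw [mul_assoc]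
      _ = S + E := by rw [hNid, mul_one]
  -- B⁻¹ = K • N
  have hBeq : (1 / (K : ℝ)) • (1 : Matrix (Fin n) (Fin n) ℝ) + (((K : ℝ) - 1) / K) • A
      = (K : ℝ)⁻¹ • (1 + M) := by
    ext i j
    by_cases h : i = j <;>
      simp [hM, Matrix.add_apply, Matrix.smul_apply, Matrix.one_apply, h, smul_eq_mul] <;> ring
  have hBinv : ((1 / (K : ℝ)) • (1 : Matrix (Fin n) (Fin n) ℝ) + (((K : ℝ) - 1) / K) • A)⁻¹
      = (K : ℝ) • N := by
    rw [hBeq]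
    apply Matrix.inv_eq_right_inv
    rw [Matrix.smul_mul, Matrix.mul_smul, hNid, smul_smul, inv_mul_cancel₀ hKne, one_smul]
  have hrK : ∀ i, r i = (K : ℝ) * ∑ j, k j * N j i := by
    intro i
    rw [hr i, hBinv, Finset.mul_sum]
    congr 1
    funext j
    simp [Matrix.smul_apply, smul_eq_mul]
    ring
  -- absolute value of powers of -M
  have habsM : ∀ (l : ℕ) (j m : Fin n), |((-M) ^ l) j m| = (M ^ l) j m := by
    intro l j m
    have h1 : (-M) ^ l = ((-1 : ℝ) ^ l) • (M ^ l) := by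
      rw [show -M = (-1 : ℝ) • M by simp, smul_pow]
    rw [h1, Matrix.smul_apply, smul_eq_mul, abs_mul, abs_pow, abs_neg, abs_one, one_pow, one_mul,
      abs_of_nonneg (bratp_pow_nonneg M hM0 l j m)]
  -- row ℓ¹ bound on E
  have hEbound : ∀ j, ∑ i, |E j i| ≤ (ξ / 2) ^ L * s := by
    intro j
    calc ∑ i, |E j i| ≤ ∑ i, ∑ m, ((M ^ L) j m * |N m i|) := by
          refine Finset.sum_le_sum fun i _ => ?_
          rw [hEdef, Matrix.mul_apply]
          refine (Finset.abs_sum_le_sum_abs _ _).trans ?_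
          refine Finset.sum_le_sum fun m _ => ?_
          rw [abs_mul, habsM]
      _ = ∑ m, (M ^ L) j m * g m := by
          rw [Finset.sum_comm]
          simp [hg, Finset.mul_sum]
      _ ≤ ∑ m, (M ^ L) j m * s :=
          Finset.sum_le_sum fun m _ =>
            mul_le_mul_of_nonneg_left (hgs m) (bratp_pow_nonneg M hM0 L j m)
      _ = (∑ m, (M ^ L) j m) * s := by rw [Finset.sum_mul]
      _ ≤ (ξ / 2) ^ L * s :=
          mul_le_mul_of_nonneg_right
            (bratp_pow_row_sum_le M hM0 (le_of_lt hhalf0) hMrow L j) hs0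
  -- on the far set, the S-part vanishes
  have hfar : ∀ i ∈ Finset.univ.filter (fun i => (L : ℝ) * δ < dist z₀ (z i)),
      ∀ j, k j * S j i = 0 := by
    intro i hi j
    rw [Finset.mem_filter] at hi
    by_cases hkj : k j = 0
    · rw [hkj, zero_mul]
    · have hdj : dist z₀ (z j) ≤ δ := by
        by_contra hc
        exact hkj (hkband j (by push_neg at hc; exact hc))
      have hSji : S j i = 0 := by
        rw [hSdef, Matrix.sum_apply]
        apply Finset.sum_eq_zero
        intro l hl
        rw [Finset.mem_range] at hl
        apply bratp_band_pow z (-M) hnegMband l j i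
        have htri := dist_triangle z₀ (z j) (z i)
        have hlL : (l : ℝ) ≤ (L : ℝ) - 1 := by
          have : (l : ℝ) + 1 ≤ (L : ℝ) := by exact_mod_cast hl
          linarith
        have h1 : ((L : ℝ) - 1) * δ < dist (z j) (z i) := by nlinarith [hi.2]
        nlinarith
      rw [hSji, mul_zero]
  -- main estimate
  have hri : ∀ i ∈ Finset.univ.filter (fun i => (L : ℝ) * δ < dist z₀ (z i)),
      |r i| ≤ (K : ℝ) * ∑ j, k j * |E j i| := by
    intro i hi
    have h1 : r i = (K : ℝ) * ∑ j, k j * E j i := by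
      rw [hrK i]
      congr 1
      refine Finset.sum_congr rfl fun j _ => ?_
      have : N j i = S j i + E j i := by rw [hdecomp, Matrix.add_apply]
      rw [this, mul_add, hfar i hi j, zero_add]
    rw [h1, abs_mul, abs_of_nonneg (le_of_lt hKpos)]
    gcongr
    refine (Finset.abs_sum_le_sum_abs _ _).trans ?_
    refine Finset.sum_le_sum fun j _ => ?_
    rw [abs_mul, abs_of_nonneg (hk0 j)]
  calc ∑ i ∈ Finset.univ.filter (fun i => (L : ℝ) * δ < dist z₀ (z i)), |r i|
      ≤ ∑ i ∈ Finset.univ.filter (fun i => (L : ℝ) * δ < dist z₀ (z i)),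
          (K : ℝ) * ∑ j, k j * |E j i| := Finset.sum_le_sum hri
    _ ≤ ∑ i, (K : ℝ) * ∑ j, k j * |E j i| := by
        apply Finset.sum_le_sum_of_subset_of_nonneg (Finset.filter_subset _ _)
        intro i _ _
        exact mul_nonneg (le_of_lt hKpos)
          (Finset.sum_nonneg fun j _ => mul_nonneg (hk0 j) (abs_nonneg _))
    _ = (K : ℝ) * ∑ j, k j * ∑ i, |E j i| := by
        rw [← Finset.mul_sum, Finset.sum_comm]
        simp [Finset.mul_sum]
    _ ≤ (K : ℝ) * ∑ j, k j * ((ξ / 2) ^ L * s) :=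
        mul_le_mul_of_nonneg_left (Finset.sum_le_sum fun j _ =>
          mul_le_mul_of_nonneg_left (hEbound j) (hk0 j)) (le_of_lt hKpos)
    _ = (K : ℝ) * ((∑ j, k j) * ((ξ / 2) ^ L * s)) := by rw [Finset.sum_mul]
    _ ≤ (K : ℝ) * (1 * ((ξ / 2) ^ L * (1 / (1 - ξ / 2)))) := by
        apply mul_le_mul_of_nonneg_left _ (le_of_lt hKpos)
        apply mul_le_mul hk1 _ _ zero_le_one
        · exact mul_le_mul_of_nonneg_left hsle (pow_nonneg (le_of_lt hhalf0) L)
        · exact mul_nonneg (pow_nonneg (le_of_lt hhalf0) L) hs0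
    _ = (K : ℝ) * (ξ / 2) ^ L / (1 - ξ / 2) := by
        rw [one_mul]
        ring
end
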